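/- arXiv:2303.03900 — 6 statements merged into one kernel-verified Lean document; each statement's English description precedes it below -/
import Mathlib

section
/- Fix ε ≥ 0. Suppose: for every θ ∈ Θ the map z ↦ ℓ(θ, z) is upper semicontinuous and P̂-integrable; c is lower semicontinuous on 𝒵 × 𝒵; there exist ẑ₀ ∈ 𝒵 and C < ∞ with ∫ c(z, ẑ₀) dP̂(z) ≤ C; there exist a metric d on 𝒵 with compact sublevel sets {z ∈ 𝒵 : d(z, ẑ) ≤ r} and p ∈ ℕ with c(z, ẑ) ≥ d(z, ẑ)^p for all z, ẑ ∈ 𝒵; and for every θ ∈ Θ there exist g > 0, ẑ₀ ∈ 𝒵 and r ∈ (0, p) with ℓ(θ, z) ≤ g(1 + d(z, ẑ₀)^r) for all z ∈ 𝒵. Then for every θ ∈ Θ the map Q ↦ ∫ ℓ(θ, z) dQ(z) is upper semicontinuous on B_ε(P̂) with respect to the topology of weak convergence. -/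
/-!
On the ambiguity set the moments `∫ δ(z, ẑ₁)^p dQ` are uniformly bounded: couple `Q` with `P̂`
and combine `δ^p ≤ c` with the triangle inequality. As the loss grows only like `δ^r` with
`r < p`, the tails `∫ (ℓ - M)⁺ dQ` then vanish as `M → ∞`, uniformly on the ambiguity set. So the
expected loss is a uniform limit of the truncated expectations `M - ∫ (M - ℓ)⁺ dQ`, which are
upper semicontinuous in `Q`: the nonnegative lower semicontinuous function `(M - ℓ)⁺` is the
increasing limit of its bounded Lipschitz Moreau–Yosida regularizations, whose integrals are
continuous for the weak topology.
-/

open MeasureTheory ENNReal Set Filter Topology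

noncomputable section

/-- The set of couplings of two measures. -/
def couplings {α : Type*} [MeasurableSpace α] (Q P : Measure α) : Set (Measure (α × α)) :=
  {π | π.map Prod.fst = Q ∧ π.map Prod.snd = P}

/-- The optimal transport discrepancy `d_c(Q, P) = inf_π ∫ c dπ`. -/
def OTDiscrepancy {α : Type*} [MeasurableSpace α] (c : α → α → ℝ≥0∞) (Q P : Measure α) :
    ℝ≥0∞ :=
  ⨅ π ∈ couplings Q P, ∫⁻ p, c p.1 p.2 ∂π

/-- The optimal transport ambiguity set `B_ε(P) = {Q : d_c(Q, P) ≤ ε}`. -/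
def ambiguitySet {α : Type*} [MeasurableSpace α] (c : α → α → ℝ≥0∞)
    (P : ProbabilityMeasure α) (ε : ℝ) : Set (ProbabilityMeasure α) :=
  {Q | OTDiscrepancy c Q.toMeasure P.toMeasure ≤ ENNReal.ofReal ε}

/-- The `[0,∞]`-valued positive part of an extended real number. -/
def erealPos (x : EReal) : ℝ≥0∞ := if x = ⊤ then ⊤ else ENNReal.ofReal x.toReal

/-- The `(−∞,∞]`-valued integral of a `(−∞,∞]`-valued function. -/
def eint {α : Type*} [MeasurableSpace α] (μ : Measure α) (f : α → EReal) : EReal :=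
  ((∫⁻ a, erealPos (f a) ∂μ : ℝ≥0∞) : EReal) - ((∫⁻ a, erealPos (-(f a)) ∂μ : ℝ≥0∞) : EReal)

open scoped NNReal BoundedContinuousFunction

section MoreauYosida

variable {Ω : Type*} [PseudoEMetricSpace Ω] {f : Ω → ℝ≥0∞}

/-- The `k`-Lipschitz regularization of `min f k`; the truncation makes it a bounded continuous
test function for weak convergence. -/
def moreauYosida (f : Ω → ℝ≥0∞) (k : ℕ) (x : Ω) : ℝ≥0∞ :=
  ⨅ y, (min (f y) k + k * edist x y)

lemma moreauYosida_le_min (k : ℕ) (x : Ω) : moreauYosida f k x ≤ min (f x) k :=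
  (iInf_le _ x).trans_eq (by simp)

lemma moreauYosida_le_add_mul_edist (k : ℕ) (x x' : Ω) :
    moreauYosida f k x ≤ moreauYosida f k x' + k * edist x x' := by
  rw [moreauYosida, moreauYosida, ENNReal.iInf_add]
  refine iInf_mono fun y => ?_
  calc min (f y) k + k * edist x y ≤ min (f y) k + k * (edist x' y + edist x x') := by
        gcongr; rw [add_comm]; exact edist_triangle x x' y
    _ = min (f y) k + k * edist x' y + k * edist x x' := by ring

lemma continuous_moreauYosida (k : ℕ) : Continuous (moreauYosida f k) :=
  continuous_of_le_add_edist k (natCast_ne_top k) (moreauYosida_le_add_mul_edist k)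

lemma monotone_moreauYosida : Monotone (moreauYosida f) := fun k l hkl x =>
  iInf_mono fun y => by gcongr

lemma iSup_moreauYosida (hf : LowerSemicontinuous f) (x : Ω) :
    ⨆ k, moreauYosida f k x = f x := by
  refine le_antisymm (iSup_le fun k => (moreauYosida_le_min k x).trans (min_le_left _ _)) ?_
  refine le_of_forall_lt_imp_le_of_dense fun a ha => ?_
  obtain ⟨η, hη, hball⟩ := Metric.nhds_basis_eball.eventually_iff.1 (hf x a ha)
  obtain ⟨k₁, hk₁⟩ := ENNReal.exists_nat_gt ha.ne_top
  obtain ⟨k₂, hk₂⟩ := ENNReal.exists_nat_mul_gt hη.ne' ha.ne_top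
  refine le_iSup_of_le (max k₁ k₂) (le_iInf fun y => ?_)
  by_cases hy : edist y x < η
  · exact le_add_right <| le_min (hball hy).le <| hk₁.le.trans (by gcongr; exact le_max_left _ _)
  · calc a ≤ k₂ * η := hk₂.le
      _ ≤ (max k₁ k₂ : ℕ) * edist x y := by
        gcongr
        · exact le_max_right _ _
        · rw [edist_comm]; exact not_lt.1 hy
      _ ≤ _ := le_add_self

variable [MeasurableSpace Ω] [OpensMeasurableSpace Ω]

lemma continuous_lintegral_moreauYosida (k : ℕ) :
    Continuous fun Q : ProbabilityMeasure Ω => ∫⁻ x, moreauYosida f k x ∂Q := by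
  have hfin : ∀ x, moreauYosida f k x ≠ ⊤ := fun x =>
    ((moreauYosida_le_min k x).trans_lt ((min_le_right _ _).trans_lt (natCast_lt_top k))).ne
  have hle : ∀ x, (moreauYosida f k x).toReal ≤ k := fun x => by
    simpa using ENNReal.toReal_mono (natCast_ne_top k)
      ((moreauYosida_le_min k x).trans (min_le_right _ _))
  let φ : Ω →ᵇ ℝ≥0 := BoundedContinuousFunction.mkOfBound
    ⟨fun x => (moreauYosida f k x).toNNReal,
      ENNReal.continuousOn_toNNReal.comp_continuous (continuous_moreauYosida k) hfin⟩ k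
    fun x y => by
      simp only [ContinuousMap.coe_mk, NNReal.dist_eq, coe_toNNReal_eq_toReal, abs_sub_le_iff]
      constructor <;> linarith [hle x, hle y, (moreauYosida f k x).toReal_nonneg,
        (moreauYosida f k y).toReal_nonneg]
  have hφ : ∀ x, (φ x : ℝ≥0∞) = moreauYosida f k x := fun x => coe_toNNReal (hfin x)
  simp_rw [← hφ]
  exact continuous_iff_continuousAt.2 fun Q =>
    ProbabilityMeasure.tendsto_iff_forall_lintegral_tendsto.1 tendsto_id φ

lemma ProbabilityMeasure.lowerSemicontinuous_lintegral (hf : LowerSemicontinuous f) :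
    LowerSemicontinuous fun Q : ProbabilityMeasure Ω => ∫⁻ x, f x ∂Q := by
  have h : ∀ Q : ProbabilityMeasure Ω, ∫⁻ x, f x ∂Q = ⨆ k, ∫⁻ x, moreauYosida f k x ∂Q :=
    fun Q => by
      simp_rw [← iSup_moreauYosida hf]
      exact lintegral_iSup (fun k => (continuous_moreauYosida k).measurable)
        monotone_moreauYosida
  simp_rw [h]
  exact lowerSemicontinuous_iSup fun k => (continuous_lintegral_moreauYosida k).lowerSemicontinuous

end MoreauYosida

lemma LowerSemicontinuous.upperSemicontinuous_coe_sub {X : Type*} [TopologicalSpace X]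
    {N : X → ℝ≥0∞} (hN : LowerSemicontinuous N) (m : ℝ) :
    UpperSemicontinuous fun x => (m : EReal) - N x := by
  have hsub : Continuous fun a : EReal => (m : EReal) - a :=
    continuous_iff_continuousAt.2 fun a =>
      (EReal.continuousAt_add (p := ((m : EReal), -a)) (Or.inl (EReal.coe_ne_top m))
        (Or.inl (EReal.coe_ne_bot m))).comp (f := fun a : EReal => ((m : EReal), -a))
        (continuousAt_const.prodMk continuous_neg.continuousAt)
  refine (hsub.comp continuous_coe_ennreal_ereal).comp_lowerSemicontinuous_antitone hN
    fun a b hab => EReal.sub_le_sub le_rfl ?_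
  exact_mod_cast hab

lemma EReal.upperSemicontinuous_coe_iff {X : Type*} [TopologicalSpace X] {f : X → ℝ} :
    UpperSemicontinuous (fun x => (f x : EReal)) ↔ UpperSemicontinuous f :=
  ⟨fun h x y hy => (h x y (EReal.coe_lt_coe_iff.2 hy)).mono fun _ => EReal.coe_lt_coe_iff.1,
    fun h x y hy => by
      obtain ⟨a, hxa, hay⟩ := EReal.exists_between_coe_real hy
      exact (h x a (EReal.coe_lt_coe_iff.1 hxa)).mono fun _ hx' =>
        (EReal.coe_lt_coe_iff.2 hx').trans hay⟩

lemma upperSemicontinuousOn_of_forall_approx {X : Type*} [TopologicalSpace X] {s : Set X}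
    {F : X → EReal}
    (h : ∀ η : ℝ, 0 < η → ∃ G : X → EReal, UpperSemicontinuousOn G s ∧
      ∀ x ∈ s, G x ≤ F x ∧ F x ≤ G x + η) :
    UpperSemicontinuousOn F s := by
  intro x hx y hy
  obtain ⟨a, hFa, hay⟩ := EReal.exists_between_coe_real hy
  obtain ⟨b, hab, hby⟩ := EReal.exists_between_coe_real hay
  obtain ⟨G, hG, hGF⟩ := h (b - a) (sub_pos.2 (EReal.coe_lt_coe_iff.1 hab))
  filter_upwards [hG x hx a ((hGF x hx).1.trans_lt hFa), self_mem_nhdsWithin] with x' hGx' hx'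
  calc F x' ≤ G x' + (b - a : ℝ) := (hGF x' hx').2
    _ < a + (b - a : ℝ) := EReal.add_lt_add_right_coe hGx' _
    _ = b := by rw [← EReal.coe_add, add_sub_cancel]
    _ < y := hby

lemma erealPos_coe (x : ℝ) : erealPos x = ENNReal.ofReal x := by
  simp [erealPos]

lemma ENNReal.ofReal_add_ofReal_sub {M : ℝ} (hM : 0 ≤ M) (x : ℝ) :
    ENNReal.ofReal x + ENNReal.ofReal (M - x) =
      ENNReal.ofReal M + ENNReal.ofReal (x - M) + ENNReal.ofReal (-x) := by
  rcases le_total x 0 with hx | hx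
  · rw [ofReal_of_nonpos hx, ofReal_of_nonpos (by linarith : x - M ≤ 0), sub_eq_add_neg,
      ofReal_add hM (by linarith)]
    simp
  rcases le_total x M with hxM | hxM
  · rw [ofReal_of_nonpos (by linarith : x - M ≤ 0), ofReal_of_nonpos (by linarith : -x ≤ 0),
      ← ofReal_add hx (by linarith)]
    simp
  · rw [ofReal_of_nonpos (by linarith : M - x ≤ 0), ofReal_of_nonpos (by linarith : -x ≤ 0),
      ← ofReal_add hM (by linarith)]
    simp

lemma EReal.coe_ennreal_sub_eq_of_add_eq {a b n t : ℝ≥0∞} {m : ℝ} (hm : 0 ≤ m) (ha : a ≠ ⊤)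
    (ht : t ≠ ⊤) (h : a + n = ENNReal.ofReal m + t + b) :
    (a : EReal) - b = ((m : EReal) - n) + t := by
  lift a to ℝ≥0 using ha
  lift t to ℝ≥0 using ht
  lift m to ℝ≥0 using hm
  rcases eq_or_ne b ⊤ with rfl | hb
  · have hn : n = ⊤ := by simpa using h
    simp [hn]
  lift b to ℝ≥0 using hb
  have hn : n ≠ ⊤ := by rintro rfl; simpa using h.symm
  lift n to ℝ≥0 using hn
  simp only [ofReal_coe_nnreal] at h
  have h' : (a : ℝ) + n = m + t + b := by exact_mod_cast h
  simp only [EReal.coe_nnreal_eq_coe_real, ← EReal.coe_sub, ← EReal.coe_add, EReal.coe_eq_coe_iff]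
  linarith

lemma eint_coe_eq_sub_add {α : Type*} [MeasurableSpace α] (μ : Measure α)
    [IsProbabilityMeasure μ] {f : α → ℝ} (hf : Measurable f) {M : ℝ} (hM : 0 ≤ M)
    (htail : ∫⁻ x, ENNReal.ofReal (f x - M) ∂μ ≠ ⊤) :
    eint μ (fun x => (f x : EReal)) =
      ((M : EReal) - (∫⁻ x, ENNReal.ofReal (M - f x) ∂μ : ℝ≥0∞)) +
        (∫⁻ x, ENNReal.ofReal (f x - M) ∂μ : ℝ≥0∞) := by
  have hpos : ∫⁻ x, ENNReal.ofReal (f x) ∂μ ≠ ⊤ := by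
    refine ne_top_of_le_ne_top (add_ne_top.2 ⟨ofReal_ne_top (r := M), htail⟩) ?_
    calc ∫⁻ x, ENNReal.ofReal (f x) ∂μ ≤ ∫⁻ x, (ENNReal.ofReal M + ENNReal.ofReal (f x - M)) ∂μ :=
          lintegral_mono fun x => by simpa using ofReal_add_le (p := M) (q := f x - M)
      _ = ENNReal.ofReal M + ∫⁻ x, ENNReal.ofReal (f x - M) ∂μ := by
          rw [lintegral_add_left measurable_const, lintegral_const, measure_univ, mul_one]
  have hsum := lintegral_congr (μ := μ) fun x => ENNReal.ofReal_add_ofReal_sub hM (f x)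
  rw [lintegral_add_left hf.ennreal_ofReal, lintegral_add_left (by fun_prop),
    lintegral_add_left measurable_const, lintegral_const, measure_univ, mul_one] at hsum
  simp only [eint, erealPos_coe, ← EReal.coe_neg]
  exact EReal.coe_ennreal_sub_eq_of_add_eq hM hpos htail hsum

lemma upperSemicontinuousOn_eint_of_forall_tail_le {Ω : Type*} [PseudoEMetricSpace Ω]
    [MeasurableSpace Ω] [OpensMeasurableSpace Ω] {L : Ω → ℝ} (hL : UpperSemicontinuous L)
    {S : Set (ProbabilityMeasure Ω)}
    (htail : ∀ η : ℝ, 0 < η → ∃ M : ℝ, 0 ≤ M ∧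
      ∀ Q ∈ S, ∫⁻ z, ENNReal.ofReal (L z - M) ∂Q ≤ ENNReal.ofReal η) :
    UpperSemicontinuousOn (fun Q : ProbabilityMeasure Ω => eint Q (fun z => (L z : EReal))) S := by
  refine upperSemicontinuousOn_of_forall_approx fun η hη => ?_
  obtain ⟨M, hM, hT⟩ := htail η hη
  have hN : LowerSemicontinuous fun z => ENNReal.ofReal (M - L z) :=
    (ENNReal.continuous_ofReal.comp (continuous_sub_left M)).comp_upperSemicontinuous_antitone
      hL fun a b hab => ENNReal.ofReal_le_ofReal (by linarith)
  refine ⟨fun Q => (M : EReal) - ∫⁻ z, ENNReal.ofReal (M - L z) ∂Q,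
    ((ProbabilityMeasure.lowerSemicontinuous_lintegral hN).upperSemicontinuous_coe_sub
      M).upperSemicontinuousOn _,
    fun Q hQ => ?_⟩
  rw [eint_coe_eq_sub_add _ hL.measurable hM (ne_top_of_le_ne_top ofReal_ne_top (hT Q hQ))]
  refine ⟨le_add_of_nonneg_right (EReal.coe_ennreal_nonneg _), ?_⟩
  gcongr
  simpa [EReal.coe_ennreal_ofReal, hη.le] using EReal.coe_ennreal_le_coe_ennreal_iff.2 (hT Q hQ)

lemma rpow_sub_rpow_le_rpow_mul_rpow {D t r p : ℝ} (hD : 0 ≤ D) (ht : 0 < t) (hr : 0 ≤ r)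
    (hrp : r ≤ p) : D ^ r - t ^ r ≤ t ^ (r - p) * D ^ p := by
  rcases le_total D t with hDt | htD
  · have : D ^ r ≤ t ^ r := Real.rpow_le_rpow hD hDt hr
    have : 0 ≤ t ^ (r - p) * D ^ p := by positivity
    linarith
  · have hDpos : 0 < D := ht.trans_le htD
    calc D ^ r - t ^ r ≤ D ^ r := sub_le_self _ (Real.rpow_nonneg ht.le r)
      _ = D ^ (r - p) * D ^ p := by rw [← Real.rpow_add hDpos, sub_add_cancel]
      _ ≤ t ^ (r - p) * D ^ p := by
        gcongr ?_ * _
        exact Real.rpow_le_rpow_of_nonpos ht htD (sub_nonpos.2 hrp)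

lemma exists_forall_lintegral_ofReal_sub_le {Ω : Type*} [MeasurableSpace Ω] {L D : Ω → ℝ}
    (hD : ∀ z, 0 ≤ D z) {g r : ℝ} {p : ℕ} (hg : 0 ≤ g) (hr : 0 ≤ r) (hrp : r < p)
    (hL : ∀ z, L z ≤ g * (1 + D z ^ r)) {K : ℝ≥0∞} (hK : K ≠ ⊤) {η : ℝ} (hη : 0 < η) :
    ∃ M : ℝ, 0 ≤ M ∧ ∀ μ : Measure Ω, ∫⁻ z, ENNReal.ofReal (D z ^ p) ∂μ ≤ K →
      ∫⁻ z, ENNReal.ofReal (L z - M) ∂μ ≤ ENNReal.ofReal η := by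
  have hlim : Tendsto (fun t : ℝ => g * t ^ (r - p) * K.toReal) atTop (𝓝 0) := by
    have := (tendsto_rpow_neg_atTop (sub_pos.2 hrp)).const_mul g |>.mul_const K.toReal
    simpa [neg_sub] using this
  obtain ⟨t, htη, ht⟩ := ((hlim.eventually_lt_const hη).and (eventually_gt_atTop 0)).exists
  refine ⟨g * (1 + t ^ r), by positivity, fun μ hμ => ?_⟩
  have hpoint : ∀ z, L z - g * (1 + t ^ r) ≤ g * t ^ (r - p) * D z ^ p := fun z => by
    have := rpow_sub_rpow_le_rpow_mul_rpow (hD z) ht hr hrp.le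
    rw [Real.rpow_natCast] at this
    nlinarith [hL z]
  calc ∫⁻ z, ENNReal.ofReal (L z - g * (1 + t ^ r)) ∂μ
      ≤ ∫⁻ z, ENNReal.ofReal (g * t ^ (r - p)) * ENNReal.ofReal (D z ^ p) ∂μ :=
        lintegral_mono fun z => by
          rw [← ofReal_mul (by positivity)]
          exact ofReal_le_ofReal (hpoint z)
    _ = ENNReal.ofReal (g * t ^ (r - p)) * ∫⁻ z, ENNReal.ofReal (D z ^ p) ∂μ :=
        lintegral_const_mul' _ _ ofReal_ne_top
    _ ≤ ENNReal.ofReal (g * t ^ (r - p)) * K := by gcongr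
    _ ≤ ENNReal.ofReal η := by
        rw [← ofReal_toReal hK, ← ofReal_mul (by positivity)]
        exact ofReal_le_ofReal htη.le

section Moments

variable {α : Type*} {δ : α → α → ℝ} (p : ℕ)

lemma ofReal_pow_le_two_pow_mul_add (hδ0 : ∀ x y, 0 ≤ δ x y)
    (hδ_tri : ∀ x y z, δ x z ≤ δ x y + δ y z) (x y z : α) :
    ENNReal.ofReal (δ x z ^ p) ≤
      2 ^ (p - 1) * (ENNReal.ofReal (δ x y ^ p) + ENNReal.ofReal (δ y z ^ p)) := by
  have h : δ x z ^ p ≤ 2 ^ (p - 1) * (δ x y ^ p + δ y z ^ p) :=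
    (pow_le_pow_left₀ (hδ0 x z) (hδ_tri x y z) p).trans (add_pow_le (hδ0 x y) (hδ0 y z) p)
  refine (ofReal_le_ofReal h).trans_eq ?_
  rw [ofReal_mul (by positivity), ofReal_add (pow_nonneg (hδ0 x y) p) (pow_nonneg (hδ0 y z) p),
    ofReal_pow zero_le_two, ofReal_ofNat]

variable [MeasurableSpace α]

lemma lintegral_ofReal_pow_le_of_mem_couplings (hδ0 : ∀ x y, 0 ≤ δ x y)
    (hδ_tri : ∀ x y z, δ x z ≤ δ x y + δ y z) (hδ_meas : ∀ w, Measurable fun z => δ z w)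
    {c : α → α → ℝ≥0∞} (hcδ : ∀ z w, ENNReal.ofReal (δ z w ^ p) ≤ c z w)
    {Q P : Measure α} {π : Measure (α × α)} (hπ : π ∈ couplings Q P) (w : α) :
    ∫⁻ z, ENNReal.ofReal (δ z w ^ p) ∂Q ≤
      2 ^ (p - 1) * (∫⁻ q, c q.1 q.2 ∂π + ∫⁻ z, ENNReal.ofReal (δ z w ^ p) ∂P) := by
  have hmeas : Measurable fun z => ENNReal.ofReal (δ z w ^ p) :=
    ((hδ_meas w).pow_const p).ennreal_ofReal
  calc ∫⁻ z, ENNReal.ofReal (δ z w ^ p) ∂Q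
      ≤ ∫⁻ q, ENNReal.ofReal (δ q.1 w ^ p) ∂π := by
        rw [← hπ.1]; exact lintegral_map_le _ _
    _ ≤ ∫⁻ q, 2 ^ (p - 1) * (c q.1 q.2 + ENNReal.ofReal (δ q.2 w ^ p)) ∂π :=
        lintegral_mono fun q => (ofReal_pow_le_two_pow_mul_add p hδ0 hδ_tri q.1 q.2 w).trans
          (by gcongr; exact hcδ q.1 q.2)
    _ = 2 ^ (p - 1) * (∫⁻ q, c q.1 q.2 ∂π + ∫⁻ z, ENNReal.ofReal (δ z w ^ p) ∂P) := by
        rw [lintegral_const_mul' _ _ (by simp),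
          lintegral_add_right _ (show Measurable fun q : α × α => ENNReal.ofReal (δ q.2 w ^ p)
            from hmeas.comp measurable_snd), ← hπ.2,
          lintegral_map hmeas measurable_snd]

lemma lintegral_ofReal_pow_le_otDiscrepancy (hδ0 : ∀ x y, 0 ≤ δ x y)
    (hδ_tri : ∀ x y z, δ x z ≤ δ x y + δ y z) (hδ_meas : ∀ w, Measurable fun z => δ z w)
    {c : α → α → ℝ≥0∞} (hcδ : ∀ z w, ENNReal.ofReal (δ z w ^ p) ≤ c z w)
    (Q P : Measure α) (w : α) :
    ∫⁻ z, ENNReal.ofReal (δ z w ^ p) ∂Q ≤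
      2 ^ (p - 1) * (OTDiscrepancy c Q P + ∫⁻ z, ENNReal.ofReal (δ z w ^ p) ∂P) := by
  calc ∫⁻ z, ENNReal.ofReal (δ z w ^ p) ∂Q
      ≤ ⨅ π ∈ couplings Q P, 2 ^ (p - 1) * (∫⁻ q, c q.1 q.2 ∂π +
          ∫⁻ z, ENNReal.ofReal (δ z w ^ p) ∂P) :=
        le_iInf₂ fun π hπ =>
          lintegral_ofReal_pow_le_of_mem_couplings p hδ0 hδ_tri hδ_meas hcδ hπ w
    _ = _ := by
        simp only [OTDiscrepancy, ENNReal.iInf_add,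
          ENNReal.mul_iInf_of_ne (pow_ne_zero _ two_ne_zero) (pow_ne_top ofNat_ne_top)]

lemma lintegral_ofReal_pow_le_two_pow_mul_add (hδ0 : ∀ x y, 0 ≤ δ x y)
    (hδ_tri : ∀ x y z, δ x z ≤ δ x y + δ y z) (P : Measure α) [IsProbabilityMeasure P]
    (v w : α) :
    ∫⁻ z, ENNReal.ofReal (δ z w ^ p) ∂P ≤
      2 ^ (p - 1) * (∫⁻ z, ENNReal.ofReal (δ z v ^ p) ∂P + ENNReal.ofReal (δ v w ^ p)) := by
  calc ∫⁻ z, ENNReal.ofReal (δ z w ^ p) ∂P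
      ≤ ∫⁻ z, 2 ^ (p - 1) * (ENNReal.ofReal (δ z v ^ p) + ENNReal.ofReal (δ v w ^ p)) ∂P :=
        lintegral_mono fun z => ofReal_pow_le_two_pow_mul_add p hδ0 hδ_tri z v w
    _ = _ := by
        rw [lintegral_const_mul' _ _ (by simp), lintegral_add_right _ measurable_const,
          lintegral_const, measure_univ, mul_one]

lemma lintegral_ofReal_pow_le_of_mem_ambiguitySet (hδ0 : ∀ x y, 0 ≤ δ x y)
    (hδ_tri : ∀ x y z, δ x z ≤ δ x y + δ y z)
    (hδ_meas : ∀ w, Measurable fun z => δ z w) {c : α → α → ℝ≥0∞}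
    (hcδ : ∀ z w, ENNReal.ofReal (δ z w ^ p) ≤ c z w) {P : ProbabilityMeasure α} {v : α} {C : ℝ}
    (hC : ∫⁻ z, c z v ∂P ≤ ENNReal.ofReal C) {ε : ℝ} {Q : ProbabilityMeasure α}
    (hQ : Q ∈ ambiguitySet c P ε) (w : α) :
    ∫⁻ z, ENNReal.ofReal (δ z w ^ p) ∂Q ≤
      2 ^ (p - 1) * (ENNReal.ofReal ε +
        2 ^ (p - 1) * (ENNReal.ofReal C + ENNReal.ofReal (δ v w ^ p))) := by
  refine (lintegral_ofReal_pow_le_otDiscrepancy p hδ0 hδ_tri hδ_meas hcδ Q P w).trans ?_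
  gcongr
  · exact hQ
  · refine (lintegral_ofReal_pow_le_two_pow_mul_add p hδ0 hδ_tri _ v w).trans ?_
    gcongr
    exact (lintegral_mono fun z => hcδ z v).trans hC

end Moments

theorem expectedLoss_upperSemicontinuousOn_general {d m : ℕ}
    (𝒵 : Set (Fin d → ℝ))
    (Θ : Set (Fin m → ℝ))
    (c : 𝒵 → 𝒵 → ℝ≥0∞)
    (Phat : ProbabilityMeasure 𝒵)
    (ℓ : (Fin m → ℝ) → 𝒵 → EReal) (hℓbot : ∀ θ z, ℓ θ z ≠ ⊥)
    (ε : ℝ)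
    -- the loss is upper semicontinuous and `P̂`-integrable in `z`
    (h_usc : ∀ θ ∈ Θ, UpperSemicontinuous (fun z : 𝒵 => ℓ θ z))
    -- moment bound at a reference point
    (zhat₀ : 𝒵) (C : ℝ) (hC : ∫⁻ z, c z zhat₀ ∂Phat.toMeasure ≤ ENNReal.ofReal C)
    -- a metric on `𝒵` with compact sublevel sets dominated by the cost
    (δ : 𝒵 → 𝒵 → ℝ)
    (hδ_id : ∀ z zhat : 𝒵, δ z zhat = 0 ↔ z = zhat)
    (hδ_symm : ∀ z zhat : 𝒵, δ z zhat = δ zhat z)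
    (hδ_tri : ∀ x y z : 𝒵, δ x z ≤ δ x y + δ y z)
    (hδ_cpt : ∀ (zhat : 𝒵) (r : ℝ), IsCompact {z : 𝒵 | δ z zhat ≤ r})
    (p : ℕ)
    (hcδ : ∀ z zhat : 𝒵, ENNReal.ofReal (δ z zhat ^ p) ≤ c z zhat)
    -- growth condition of order `r < p` on the loss
    (h_growth : ∀ θ ∈ Θ, ∃ g : ℝ, 0 < g ∧ ∃ zhat₁ : 𝒵, ∃ r : ℝ, 0 < r ∧ r < (p : ℝ) ∧
      ∀ z : 𝒵, ℓ θ z ≤ ((g * (1 + δ z zhat₁ ^ r) : ℝ) : EReal)) :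
    ∀ θ ∈ Θ, UpperSemicontinuousOn
      (fun Q : ProbabilityMeasure 𝒵 => eint Q.toMeasure (ℓ θ))
      (ambiguitySet c Phat ε) := by
  intro θ hθ
  obtain ⟨g, hg, zhat₁, r, hr, hrp, hgrow⟩ := h_growth θ hθ
  have hδ0 : ∀ z w, 0 ≤ δ z w := fun z w => by
    linarith [hδ_tri z w z, hδ_symm z w, (hδ_id z z).2 rfl]
  have hδ_meas : ∀ w, Measurable fun z => δ z w := fun w =>
    (lowerSemicontinuous_iff_isClosed_preimage.2 fun y => (hδ_cpt w y).isClosed).measurable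
  set L : 𝒵 → ℝ := fun z => (ℓ θ z).toReal
  have hℓL : ∀ z, ℓ θ z = L z := fun z =>
    (EReal.coe_toReal ((hgrow z).trans_lt (EReal.coe_lt_top _)).ne (hℓbot θ z)).symm
  have hL_usc := h_usc θ hθ
  simp only [hℓL, EReal.upperSemicontinuous_coe_iff] at hL_usc
  simp only [hℓL, EReal.coe_le_coe_iff] at hgrow
  rw [show ℓ θ = fun z => (L z : EReal) from funext hℓL]
  refine upperSemicontinuousOn_eint_of_forall_tail_le hL_usc fun η hη => ?_
  obtain ⟨M, hM, htail⟩ := exists_forall_lintegral_ofReal_sub_le (fun z => hδ0 z zhat₁) hg.le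
    hr.le hrp hgrow (K := 2 ^ (p - 1) * (ENNReal.ofReal ε +
      2 ^ (p - 1) * (ENNReal.ofReal C + ENNReal.ofReal (δ zhat₀ zhat₁ ^ p)))) (by finiteness) hη
  exact ⟨M, hM, fun Q hQ => htail Q
    (lintegral_ofReal_pow_le_of_mem_ambiguitySet p hδ0 hδ_tri hδ_meas hcδ hC hQ zhat₁)⟩

/-- **Weak upper semicontinuity of the expected loss in the distribution.**
Under upper semicontinuity and `P̂`-integrability of the loss, lower semicontinuity of the
transportation cost, a moment bound at a reference point, domination of the `p`-th power of
a metric with compact sublevel sets by the cost, and a sublinear (of order `r < p`) growth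
condition on the loss, the map `Q ↦ ∫ ℓ(θ, z) dQ(z)` is upper semicontinuous on `B_ε(P̂)`
with respect to the topology of weak convergence. -/
theorem expectedLoss_upperSemicontinuousOn {d m : ℕ}
    (𝒵 : Set (Fin d → ℝ)) (h𝒵closed : IsClosed 𝒵) (h𝒵ne : 𝒵.Nonempty)
    (Θ : Set (Fin m → ℝ)) (hΘclosed : IsClosed Θ) (hΘne : Θ.Nonempty)
    (c : 𝒵 → 𝒵 → ℝ≥0∞) (hc_id : ∀ z zhat : 𝒵, c z zhat = 0 ↔ z = zhat)
    (Phat : ProbabilityMeasure 𝒵)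
    (ℓ : (Fin m → ℝ) → 𝒵 → EReal) (hℓbot : ∀ θ z, ℓ θ z ≠ ⊥)
    (ε : ℝ) (hε : 0 ≤ ε)
    -- the loss is upper semicontinuous and `P̂`-integrable in `z`
    (h_usc : ∀ θ ∈ Θ, UpperSemicontinuous (fun z : 𝒵 => ℓ θ z))
    (h_int : ∀ θ ∈ Θ, (∫⁻ z, erealPos (ℓ θ z) ∂Phat.toMeasure) ≠ ⊤ ∧
      (∫⁻ z, erealPos (-(ℓ θ z)) ∂Phat.toMeasure) ≠ ⊤)
    -- the cost is lower semicontinuous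
    (hc_lsc : LowerSemicontinuous (fun q : 𝒵 × 𝒵 => c q.1 q.2))
    -- moment bound at a reference point
    (zhat₀ : 𝒵) (C : ℝ) (hC : ∫⁻ z, c z zhat₀ ∂Phat.toMeasure ≤ ENNReal.ofReal C)
    -- a metric on `𝒵` with compact sublevel sets dominated by the cost
    (δ : 𝒵 → 𝒵 → ℝ)
    (hδ_id : ∀ z zhat : 𝒵, δ z zhat = 0 ↔ z = zhat)
    (hδ_symm : ∀ z zhat : 𝒵, δ z zhat = δ zhat z)
    (hδ_tri : ∀ x y z : 𝒵, δ x z ≤ δ x y + δ y z)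
    (hδ_cpt : ∀ (zhat : 𝒵) (r : ℝ), IsCompact {z : 𝒵 | δ z zhat ≤ r})
    (p : ℕ) (hp : 1 ≤ p)
    (hcδ : ∀ z zhat : 𝒵, ENNReal.ofReal (δ z zhat ^ p) ≤ c z zhat)
    -- growth condition of order `r < p` on the loss
    (h_growth : ∀ θ ∈ Θ, ∃ g : ℝ, 0 < g ∧ ∃ zhat₁ : 𝒵, ∃ r : ℝ, 0 < r ∧ r < (p : ℝ) ∧
      ∀ z : 𝒵, ℓ θ z ≤ ((g * (1 + δ z zhat₁ ^ r) : ℝ) : EReal)) :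
    ∀ θ ∈ Θ, UpperSemicontinuousOn
      (fun Q : ProbabilityMeasure 𝒵 => eint Q.toMeasure (ℓ θ))
      (ambiguitySet c Phat ε) :=
  expectedLoss_upperSemicontinuousOn_general 𝒵 Θ c Phat ℓ hℓbot ε h_usc zhat₀ C hC δ hδ_id hδ_symm
    hδ_tri hδ_cpt p hcδ h_growth
end
end

section
/- Let L : ℝ → (−∞, ∞] be proper, convex and lower semicontinuous, and let c : ℝ^d × ℝ^d → [0, ∞] be proper and lower semicontinuous with c(z, ẑ) = 0 if and only if z = ẑ. For θ ∈ ℝ^d, λ ≥ 0 and ẑ ∈ ℝ^d, define ℓ_c(θ, λ, ẑ) = sup{L(⟨θ, z⟩) − λ c(z, ẑ) : z ∈ dom c(·, ẑ)}, where 0·c(z, ẑ) = 0 for z ∈ dom c(·, ẑ). Then ℓ_c(θ, λ, ẑ) = sup_{γ ∈ dom L*} λ c^{*1}(γθ/λ, ẑ) − L*(γ), where for λ = 0 the perspective λ c^{*1}(x/λ, ẑ) is understood as the support function sup{⟨x, z⟩ : z ∈ dom c(·, ẑ)}. Moreover, for each fixed ẑ, the map (θ, λ) ↦ ℓ_c(θ,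 λ, ẑ) is convex on ℝ^d × [0, ∞). -/
open ENNReal Set

noncomputable section

/-- The inner product `⟨x, y⟩ = Σ_i x_i y_i` on `ℝ^d`. -/
def dotp {d : ℕ} (x y : Fin d → ℝ) : ℝ := ∑ i, x i * y i

/-!
Fenchel–Moreau on the line: `L t = sup_{γ ∈ dom L*} γ t - L* γ`. For `m < L s₀` one separates
`(s₀, m)` strictly from the closed convex epigraph of `L`; a non-vertical separating line is an
affine minorant of `L` above `m` at `s₀`, and a vertical one is used to tilt an arbitrary affine
minorant (which exists by the same argument at a point of `dom L`) until it exceeds `m` at `s₀`.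

Substituting `t = ⟨θ, z⟩` and exchanging the suprema over `z` and `γ` writes `ℓ_c(θ, λ, ẑ)` as a
supremum of the functions `γ ⟨θ, z⟩ - λ c(z, ẑ) - L* γ`, which are affine in `(θ, λ)`; hence the
convexity, and the inner supremum over `z` is the perspective `λ c^{*1}(γθ/λ, ẑ)`.
-/

open Matrix

lemma dotp_eq_dotProduct {d : ℕ} (x y : Fin d → ℝ) : dotp x y = x ⬝ᵥ y := rfl

namespace EReal

lemma iSup_sub_coe {ι : Sort*} (f : ι → EReal) (r : ℝ) :
    (⨆ i, f i) - (r : EReal) = ⨆ i, (f i - r) :=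
  GaloisConnection.l_iSup (u := (· + (r : EReal))) fun _ _ =>
    sub_le_iff_le_add (.inl (coe_ne_bot r)) (.inl (coe_ne_top r))

lemma coe_mul_iSup {ι : Sort*} {r : ℝ} (hr : 0 < r) (f : ι → EReal) :
    (r : EReal) * ⨆ i, f i = ⨆ i, (r : EReal) * f i := by
  have gc : GaloisConnection (· * (r : EReal)) (· / (r : EReal)) := fun _ _ =>
    (le_div_iff_mul_le (EReal.coe_pos.2 hr) (coe_ne_top r)).symm
  simpa only [mul_comm (r : EReal)] using gc.l_iSup

end EReal

def convexConjugate (L : ℝ → EReal) (γ : ℝ) : EReal := ⨆ s : ℝ, ((γ * s : ℝ) : EReal) - L s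

def IsConvexEReal (L : ℝ → EReal) : Prop :=
  ∀ s t : ℝ, ∀ a b : ℝ, 0 ≤ a → 0 ≤ b → a + b = 1 →
    L (a * s + b * t) ≤ (a : EReal) * L s + (b : EReal) * L t

def realEpigraph (L : ℝ → EReal) : Set (ℝ × ℝ) := {p | L p.1 ≤ p.2}

lemma exists_strict_separation_prod {C : Set (ℝ × ℝ)} (hconv : Convex ℝ C) (hclosed : IsClosed C)
    {x : ℝ × ℝ} (hx : x ∉ C) :
    ∃ α β u : ℝ, α * x.1 + β * x.2 < u ∧ ∀ p ∈ C, u < α * p.1 + β * p.2 := by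
  obtain ⟨f, u, hfx, hfC⟩ := geometric_hahn_banach_point_closed hconv hclosed hx
  have hf (p : ℝ × ℝ) : f p = f (1, 0) * p.1 + f (0, 1) * p.2 := by
    conv_lhs => rw [show p = p.1 • ((1 : ℝ), (0 : ℝ)) + p.2 • ((0 : ℝ), (1 : ℝ)) by ext <;> simp]
    rw [map_add, map_smul, map_smul, smul_eq_mul, smul_eq_mul, mul_comm, mul_comm p.2]
  exact ⟨f (1, 0), f (0, 1), u, hf x ▸ hfx, fun p hp => hf p ▸ hfC p hp⟩

section ConvexConjugate

variable {L : ℝ → EReal}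

lemma convexConjugate_le_coe_iff {γ k : ℝ} :
    convexConjugate L γ ≤ k ↔ ∀ s, ((γ * s - k : ℝ) : EReal) ≤ L s := by
  simp only [convexConjugate, iSup_le_iff, EReal.coe_sub]
  refine forall_congr' fun s => ?_
  rw [EReal.sub_le_iff_le_add (.inr (EReal.coe_ne_top k)) (.inr (EReal.coe_ne_bot k)),
    EReal.sub_le_iff_le_add (.inl (EReal.coe_ne_bot k)) (.inl (EReal.coe_ne_top k)), add_comm]

lemma convexConjugate_le_coe_iff_realEpigraph {γ k : ℝ} :
    convexConjugate L γ ≤ k ↔ ∀ p ∈ realEpigraph L, γ * p.1 - k ≤ p.2 := by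
  rw [convexConjugate_le_coe_iff]
  refine ⟨fun h p hp => EReal.coe_le_coe_iff.1 ((h p.1).trans hp), fun h s => ?_⟩
  induction hs : L s using EReal.rec with
  | bot =>
    have := h (s, γ * s - k - 1) (by simp [realEpigraph, hs])
    linarith
  | coe v => exact EReal.coe_le_coe_iff.2 (h (s, v) (by simp [realEpigraph, hs]))
  | top => exact le_top

lemma convexConjugate_ne_bot (htop : ∃ s, L s ≠ ⊤) (γ : ℝ) : convexConjugate L γ ≠ ⊥ := by
  obtain ⟨s, hs⟩ := htop
  refine ne_bot_of_le_ne_bot ?_ (le_iSup (fun s => ((γ * s : ℝ) : EReal) - L s) s)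
  induction hLs : L s using EReal.rec with
  | bot => exact EReal.coe_sub_bot _ ▸ top_ne_bot
  | coe v => exact EReal.coe_sub _ v ▸ EReal.coe_ne_bot _
  | top => exact absurd hLs hs

lemma IsConvexEReal.convex_realEpigraph (hconv : IsConvexEReal L) :
    Convex ℝ (realEpigraph L) := by
  rintro p hp q hq a b ha hb hab
  calc L (a * p.1 + b * q.1) ≤ a * L p.1 + b * L q.1 := hconv _ _ a b ha hb hab
    _ ≤ a * p.2 + b * q.2 := add_le_add (mul_le_mul_of_nonneg_left hp (EReal.coe_nonneg.2 ha))
          (mul_le_mul_of_nonneg_left hq (EReal.coe_nonneg.2 hb))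
    _ = ((a * p.2 + b * q.2 : ℝ) : EReal) := by norm_cast

lemma LowerSemicontinuous.isClosed_realEpigraph (hlsc : LowerSemicontinuous L) :
    IsClosed (realEpigraph L) :=
  hlsc.isClosed_epigraph.preimage
    (continuous_fst.prodMk (continuous_coe_real_ereal.comp continuous_snd))

lemma nonneg_of_forall_mem_realEpigraph_lt {α β u : ℝ} (htop : ∃ s, L s ≠ ⊤)
    (hsep : ∀ p ∈ realEpigraph L, u < α * p.1 + β * p.2) : 0 ≤ β := by
  obtain ⟨s, hs⟩ := htop
  by_contra! hβ
  set t := max (L s).toReal ((u - α * s) / β)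
  have hst : (s, t) ∈ realEpigraph L :=
    (EReal.le_coe_toReal hs).trans (EReal.coe_le_coe_iff.2 (le_max_left _ _))
  have hβt : β * t ≤ u - α * s :=
    calc β * t ≤ β * ((u - α * s) / β) := mul_le_mul_of_nonpos_left (le_max_right _ _) hβ.le
      _ = u - α * s := mul_div_cancel₀ _ hβ.ne
  linarith [hsep _ hst]

lemma convexConjugate_neg_div_le_of_separation {α β u : ℝ} (hβ : 0 < β)
    (hsep : ∀ p ∈ realEpigraph L, u < α * p.1 + β * p.2) :
    convexConjugate L (-α / β) ≤ ((-u / β : ℝ) : EReal) :=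
  convexConjugate_le_coe_iff_realEpigraph.2 fun p hp => by
    rw [show -α / β * p.1 - -u / β = (u - α * p.1) / β by ring, div_le_iff₀ hβ]
    linarith [hsep p hp]

lemma exists_convexConjugate_ne_top (hbot : ∀ s, L s ≠ ⊥) (htop : ∃ s, L s ≠ ⊤)
    (hconv : IsConvexEReal L) (hlsc : LowerSemicontinuous L) :
    ∃ γ, convexConjugate L γ ≠ ⊤ := by
  obtain ⟨s, hs⟩ := htop
  obtain ⟨v, hv⟩ : ∃ v : ℝ, L s = v := ⟨_, (EReal.coe_toReal hs (hbot s)).symm⟩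
  obtain ⟨α, β, u, hlt, hsep⟩ := exists_strict_separation_prod hconv.convex_realEpigraph
    hlsc.isClosed_realEpigraph (x := (s, v - 1)) (by simp [realEpigraph, hv, -EReal.coe_sub])
  have hβ : 0 < β := by
    have := hsep (s, v) hv.le
    simp only at hlt this
    linarith
  exact ⟨_, ne_top_of_le_ne_top (EReal.coe_ne_top _)
    (convexConjugate_neg_div_le_of_separation hβ hsep)⟩

lemma exists_convexConjugate_le_of_vertical_separation {γ₀ k₀ α u s₀ : ℝ}
    (hγ₀ : convexConjugate L γ₀ ≤ k₀) (hsep : ∀ p ∈ realEpigraph L, u < α * p.1)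
    (hs₀ : α * s₀ < u) (m : ℝ) :
    ∃ γ k : ℝ, convexConjugate L γ ≤ k ∧ m ≤ γ * s₀ - k := by
  set T := max 0 ((m - (γ₀ * s₀ - k₀)) / (u - α * s₀))
  have hT : 0 ≤ T := le_max_left _ _
  have hTm : m - (γ₀ * s₀ - k₀) ≤ T * (u - α * s₀) :=
    (div_le_iff₀ (by linarith)).1 (le_max_right _ _)
  refine ⟨γ₀ - T * α, k₀ - T * u,
    convexConjugate_le_coe_iff_realEpigraph.2 fun p hp => ?_, by linarith⟩
  have h₀ := convexConjugate_le_coe_iff_realEpigraph.1 hγ₀ p hp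
  nlinarith [mul_le_mul_of_nonneg_left (hsep p hp).le hT]

lemma exists_convexConjugate_le_of_lt (hbot : ∀ s, L s ≠ ⊥) (htop : ∃ s, L s ≠ ⊤)
    (hconv : IsConvexEReal L) (hlsc : LowerSemicontinuous L) {s₀ m : ℝ}
    (hm : (m : EReal) < L s₀) :
    ∃ γ k : ℝ, convexConjugate L γ ≤ k ∧ m ≤ γ * s₀ - k := by
  obtain ⟨α, β, u, hlt, hsep⟩ := exists_strict_separation_prod hconv.convex_realEpigraph
    hlsc.isClosed_realEpigraph (x := (s₀, m)) (by simpa [realEpigraph] using hm)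
  rcases (nonneg_of_forall_mem_realEpigraph_lt htop hsep).eq_or_lt with rfl | hβ
  · obtain ⟨γ₀, hγ₀⟩ := exists_convexConjugate_ne_top hbot htop hconv hlsc
    exact exists_convexConjugate_le_of_vertical_separation (EReal.le_coe_toReal hγ₀)
      (by simpa using hsep) (by simpa using hlt) m
  · refine ⟨-α / β, -u / β, convexConjugate_neg_div_le_of_separation hβ hsep, ?_⟩
    rw [show -α / β * s₀ - -u / β = (u - α * s₀) / β by ring, le_div_iff₀ hβ]
    simp only at hlt
    linarith

theorem biSup_sub_convexConjugate_eq (hbot : ∀ s, L s ≠ ⊥) (htop : ∃ s, L s ≠ ⊤)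
    (hconv : IsConvexEReal L) (hlsc : LowerSemicontinuous L) (s : ℝ) :
    ⨆ γ ∈ {γ | convexConjugate L γ ≠ ⊤},
      ((γ * s - (convexConjugate L γ).toReal : ℝ) : EReal) = L s := by
  refine le_antisymm
    (iSup₂_le fun γ hγ => convexConjugate_le_coe_iff.1 (EReal.le_coe_toReal hγ) s) ?_
  refine EReal.ge_of_forall_gt_iff_ge.1 fun m hm => ?_
  obtain ⟨γ, k, hγk, hmk⟩ := exists_convexConjugate_le_of_lt hbot htop hconv hlsc hm
  have hk : (convexConjugate L γ).toReal ≤ k := by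
    simpa using EReal.toReal_le_toReal hγk (convexConjugate_ne_bot htop γ) (EReal.coe_ne_top k)
  exact le_iSup₂_of_le γ (ne_top_of_le_ne_top (EReal.coe_ne_top k) hγk)
    (EReal.coe_le_coe_iff.2 (by linarith))

end ConvexConjugate

section CTransform

variable {d : ℕ} {L : ℝ → EReal} {h : (Fin d → ℝ) → ℝ≥0∞}

def cTransform (L : ℝ → EReal) (h : (Fin d → ℝ) → ℝ≥0∞) (θ : Fin d → ℝ) (lam : ℝ) : EReal :=
  ⨆ z ∈ {z | h z ≠ ⊤}, L (dotp θ z) - ((ENNReal.ofReal lam * h z : ℝ≥0∞) : EReal)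

def conjPerspective (h : (Fin d → ℝ) → ℝ≥0∞) (lam : ℝ) (x : Fin d → ℝ) : EReal :=
  if 0 < lam then (lam : EReal) * ⨆ z, ((dotp (lam⁻¹ • x) z : ℝ) : EReal) - (h z : EReal)
  else ⨆ z ∈ {z | h z ≠ ⊤}, ((dotp x z : ℝ) : EReal)

lemma biSup_dotp_sub_eq_conjPerspective {lam : ℝ} (hlam : 0 ≤ lam) (x : Fin d → ℝ) :
    ⨆ z ∈ {z | h z ≠ ⊤}, ((dotp x z - lam * (h z).toReal : ℝ) : EReal) =
      conjPerspective h lam x := by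
  unfold conjPerspective
  split_ifs with hpos
  · rw [EReal.coe_mul_iSup hpos]
    refine iSup_congr fun z => ?_
    by_cases hz : h z = ⊤
    · simp [hz, EReal.coe_mul_bot_of_pos hpos]
    · rw [iSup_pos (show z ∈ {z | h z ≠ ⊤} from hz), ← EReal.coe_ennreal_toReal hz,
        ← EReal.coe_sub, ← EReal.coe_mul, EReal.coe_eq_coe_iff]
      simp only [dotp_eq_dotProduct, smul_dotProduct, smul_eq_mul]
      field_simp
  · obtain rfl : lam = 0 := (not_lt.1 hpos).antisymm hlam
    simp

lemma cTransform_eq_biSup (hbot : ∀ s, L s ≠ ⊥) (htop : ∃ s, L s ≠ ⊤)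
    (hconv : IsConvexEReal L) (hlsc : LowerSemicontinuous L) {lam : ℝ} (hlam : 0 ≤ lam)
    (θ : Fin d → ℝ) :
    cTransform L h θ lam = ⨆ γ ∈ {γ | convexConjugate L γ ≠ ⊤}, ⨆ z ∈ {z | h z ≠ ⊤},
      ((γ * dotp θ z - lam * (h z).toReal - (convexConjugate L γ).toReal : ℝ) : EReal) := by
  rw [cTransform, iSup₂_comm]
  refine biSup_congr fun z hz => ?_
  rw [← EReal.coe_ennreal_toReal (mul_ne_top ofReal_ne_top hz), toReal_mul,
    toReal_ofReal hlam, ← biSup_sub_convexConjugate_eq hbot htop hconv hlsc (dotp θ z)]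
  simp only [EReal.iSup_sub_coe, ← EReal.coe_sub, sub_right_comm _ (lam * _)]

lemma cTransform_convex_combination_le (hbot : ∀ s, L s ≠ ⊥) (htop : ∃ s, L s ≠ ⊤)
    (hconv : IsConvexEReal L) (hlsc : LowerSemicontinuous L) {θ₁ θ₂ : Fin d → ℝ}
    {lam₁ lam₂ a b : ℝ} (hlam₁ : 0 ≤ lam₁) (hlam₂ : 0 ≤ lam₂) (ha : 0 ≤ a) (hb : 0 ≤ b)
    (hab : a + b = 1) :
    cTransform L h (a • θ₁ + b • θ₂) (a * lam₁ + b * lam₂) ≤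
      a * cTransform L h θ₁ lam₁ + b * cTransform L h θ₂ lam₂ := by
  rw [cTransform_eq_biSup hbot htop hconv hlsc (by positivity),
    cTransform_eq_biSup hbot htop hconv hlsc hlam₁, cTransform_eq_biSup hbot htop hconv hlsc hlam₂]
  refine iSup₂_le fun γ hγ => iSup₂_le fun z hz => ?_
  set K := (convexConjugate L γ).toReal
  have hsplit : ((γ * dotp (a • θ₁ + b • θ₂) z - (a * lam₁ + b * lam₂) * (h z).toReal - K : ℝ)
      : EReal) = a * ((γ * dotp θ₁ z - lam₁ * (h z).toReal - K : ℝ) : EReal) +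
        b * ((γ * dotp θ₂ z - lam₂ * (h z).toReal - K : ℝ) : EReal) := by
    rw [← EReal.coe_mul, ← EReal.coe_mul, ← EReal.coe_add, EReal.coe_eq_coe_iff]
    simp only [dotp_eq_dotProduct, add_dotProduct, smul_dotProduct, smul_eq_mul]
    linear_combination K * hab
  rw [hsplit]
  gcongr <;> exact le_iSup₂_of_le γ hγ (le_iSup₂_of_le z hz le_rfl)

theorem cTransform_eq_biSup_conjPerspective (hbot : ∀ s, L s ≠ ⊥) (htop : ∃ s, L s ≠ ⊤)
    (hconv : IsConvexEReal L) (hlsc : LowerSemicontinuous L) {lam : ℝ} (hlam : 0 ≤ lam)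
    (θ : Fin d → ℝ) :
    cTransform L h θ lam = ⨆ γ ∈ {γ | convexConjugate L γ ≠ ⊤},
      conjPerspective h lam (γ • θ) - convexConjugate L γ := by
  rw [cTransform_eq_biSup hbot htop hconv hlsc hlam]
  refine biSup_congr fun γ hγ => ?_
  obtain ⟨K, hK⟩ : ∃ K : ℝ, convexConjugate L γ = K :=
    ⟨_, (EReal.coe_toReal hγ (convexConjugate_ne_bot htop γ)).symm⟩
  rw [hK, EReal.toReal_coe, ← biSup_dotp_sub_eq_conjPerspective hlam]
  simp only [EReal.iSup_sub_coe, ← EReal.coe_sub, dotp_eq_dotProduct, smul_dotProduct, smul_eq_mul]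

end CTransform

theorem toland_duality_c_transform_general {d : ℕ}
    (L : ℝ → EReal)
    (hLproper : (∀ s, L s ≠ ⊥) ∧ (∃ s, L s ≠ ⊤))
    (hLconv : ∀ s t : ℝ, ∀ a b : ℝ, 0 ≤ a → 0 ≤ b → a + b = 1 →
      L (a * s + b * t) ≤ (a : EReal) * L s + (b : EReal) * L t)
    (hLlsc : LowerSemicontinuous L)
    (c : (Fin d → ℝ) → (Fin d → ℝ) → ℝ≥0∞) :
    (∀ (θ zhat : Fin d → ℝ) (lam : ℝ), 0 ≤ lam →
      (⨆ z ∈ {z : Fin d → ℝ | c z zhat ≠ ⊤},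
          L (dotp θ z) - ((ENNReal.ofReal lam * c z zhat : ℝ≥0∞) : EReal)) =
      (⨆ γ ∈ {γ : ℝ | (⨆ s : ℝ, ((γ * s : ℝ) : EReal) - L s) ≠ ⊤},
          (if 0 < lam then
            (lam : EReal) *
              (⨆ z : Fin d → ℝ,
                ((dotp (lam⁻¹ • (γ • θ)) z : ℝ) : EReal) - ((c z zhat : ℝ≥0∞) : EReal))
          else
            ⨆ z ∈ {z : Fin d → ℝ | c z zhat ≠ ⊤}, ((dotp (γ • θ) z : ℝ) : EReal)) -
          (⨆ s : ℝ, ((γ * s : ℝ) : EReal) - L s))) ∧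
    (∀ zhat : Fin d → ℝ, ∀ θ₁ θ₂ : Fin d → ℝ, ∀ lam₁ lam₂ : ℝ, 0 ≤ lam₁ → 0 ≤ lam₂ →
      ∀ a b : ℝ, 0 ≤ a → 0 ≤ b → a + b = 1 →
      (⨆ z ∈ {z : Fin d → ℝ | c z zhat ≠ ⊤},
          L (dotp (a • θ₁ + b • θ₂) z) -
            ((ENNReal.ofReal (a * lam₁ + b * lam₂) * c z zhat : ℝ≥0∞) : EReal)) ≤
      (a : EReal) *
        (⨆ z ∈ {z : Fin d → ℝ | c z zhat ≠ ⊤},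
          L (dotp θ₁ z) - ((ENNReal.ofReal lam₁ * c z zhat : ℝ≥0∞) : EReal)) +
      (b : EReal) *
        (⨆ z ∈ {z : Fin d → ℝ | c z zhat ≠ ⊤},
          L (dotp θ₂ z) - ((ENNReal.ofReal lam₂ * c z zhat : ℝ≥0∞) : EReal))) := by
  obtain ⟨hbot, htop⟩ := hLproper
  exact ⟨fun θ zhat lam hlam => cTransform_eq_biSup_conjPerspective (h := (c · zhat)) hbot htop
      hLconv hLlsc hlam θ,
    fun zhat θ₁ θ₂ lam₁ lam₂ hlam₁ hlam₂ a b ha hb hab =>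
      cTransform_convex_combination_le (h := (c · zhat)) hbot htop hLconv hLlsc
        hlam₁ hlam₂ ha hb hab⟩

/-- **Toland-type nonconvex duality for the `c`-transform.**
For a proper convex lower semicontinuous univariate loss `L` and a proper lower
semicontinuous transportation cost `c` satisfying the identity of indiscernibles, the
`c`-transform `ℓ_c(θ, λ, ẑ) = sup {L(⟨θ, z⟩) − λ c(z, ẑ) : z ∈ dom c(·, ẑ)}` equals
`sup_{γ ∈ dom L*} λ c^{*1}(γθ/λ, ẑ) − L*(γ)`, where for `λ = 0` the perspective is the
support function of `dom c(·, ẑ)`; moreover, `(θ, λ) ↦ ℓ_c(θ, λ, ẑ)` is convex on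
`ℝ^d × [0, ∞)` for each fixed `ẑ`. -/
theorem toland_duality_c_transform {d : ℕ}
    (L : ℝ → EReal)
    (hLproper : (∀ s, L s ≠ ⊥) ∧ (∃ s, L s ≠ ⊤))
    (hLconv : ∀ s t : ℝ, ∀ a b : ℝ, 0 ≤ a → 0 ≤ b → a + b = 1 →
      L (a * s + b * t) ≤ (a : EReal) * L s + (b : EReal) * L t)
    (hLlsc : LowerSemicontinuous L)
    (c : (Fin d → ℝ) → (Fin d → ℝ) → ℝ≥0∞)
    (hc_id : ∀ z zhat, c z zhat = 0 ↔ z = zhat)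
    (hc_lsc : LowerSemicontinuous (fun q : (Fin d → ℝ) × (Fin d → ℝ) => c q.1 q.2)) :
    (∀ (θ zhat : Fin d → ℝ) (lam : ℝ), 0 ≤ lam →
      (⨆ z ∈ {z : Fin d → ℝ | c z zhat ≠ ⊤},
          L (dotp θ z) - ((ENNReal.ofReal lam * c z zhat : ℝ≥0∞) : EReal)) =
      (⨆ γ ∈ {γ : ℝ | (⨆ s : ℝ, ((γ * s : ℝ) : EReal) - L s) ≠ ⊤},
          (if 0 < lam then
            (lam : EReal) *
              (⨆ z : Fin d → ℝ,
                ((dotp (lam⁻¹ • (γ • θ)) z : ℝ) : EReal) - ((c z zhat : ℝ≥0∞) : EReal))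
          else
            ⨆ z ∈ {z : Fin d → ℝ | c z zhat ≠ ⊤}, ((dotp (γ • θ) z : ℝ) : EReal)) -
          (⨆ s : ℝ, ((γ * s : ℝ) : EReal) - L s))) ∧
    (∀ zhat : Fin d → ℝ, ∀ θ₁ θ₂ : Fin d → ℝ, ∀ lam₁ lam₂ : ℝ, 0 ≤ lam₁ → 0 ≤ lam₂ →
      ∀ a b : ℝ, 0 ≤ a → 0 ≤ b → a + b = 1 →
      (⨆ z ∈ {z : Fin d → ℝ | c z zhat ≠ ⊤},
          L (dotp (a • θ₁ + b • θ₂) z) -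
            ((ENNReal.ofReal (a * lam₁ + b * lam₂) * c z zhat : ℝ≥0∞) : EReal)) ≤
      (a : EReal) *
        (⨆ z ∈ {z : Fin d → ℝ | c z zhat ≠ ⊤},
          L (dotp θ₁ z) - ((ENNReal.ofReal lam₁ * c z zhat : ℝ≥0∞) : EReal)) +
      (b : EReal) *
        (⨆ z ∈ {z : Fin d → ℝ | c z zhat ≠ ⊤},
          L (dotp θ₂ z) - ((ENNReal.ofReal lam₂ * c z zhat : ℝ≥0∞) : EReal))) :=
  toland_duality_c_transform_general L hLproper hLconv hLlsc c
end
end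

section
/- Let ‖·‖ be a norm on ℝ^d with dual norm ‖θ‖_* = sup{⟨θ, x⟩ : ‖x‖ ≤ 1}, let p ≥ 1, and let L : ℝ → (−∞, ∞] be proper. Then for all θ, ẑ ∈ ℝ^d and all λ ≥ 0: sup_{z ∈ ℝ^d} ( L(⟨θ, z⟩) − λ ‖z − ẑ‖^p ) = sup_{γ ∈ ℝ} ( L(⟨θ, ẑ⟩ + γ ‖θ‖_*) − λ |γ|^p ). -/
/-!
Since `‖·‖` is a norm on a finite-dimensional space, its unit ball is compact, so the dual norm is
attained: `‖θ‖_* = ⟨θ, x₀⟩` for some `‖x₀‖ ≤ 1`. Moving along the line `z = ẑ + γ x₀` gives `≥`.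
Conversely, by `|⟨θ, w⟩| ≤ ‖θ‖_* ‖w‖` every `z` is matched by `γ = ⟨θ, z - ẑ⟩ / ‖θ‖_*`, which
reaches the same value of `L` at no larger cost (when `‖θ‖_* = 0`, both `⟨θ, z - ẑ⟩` and `γ`
vanish).
-/

open ENNReal Set

noncomputable section

/-- The dual norm `‖θ‖_* = sup {⟨θ, x⟩ : ‖x‖ ≤ 1}` of a norm `N` on `ℝ^d`. -/
def dualNorm {d : ℕ} (N : (Fin d → ℝ) → ℝ) (θ : Fin d → ℝ) : ℝ :=
  sSup {r : ℝ | ∃ x : Fin d → ℝ, N x ≤ 1 ∧ r = dotp θ x}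

theorem EReal.iSup_sub_coe_le_iSup_sub_coe {ι κ : Sort*} {F : ι → EReal} {G : κ → EReal}
    {c : ι → ℝ} {c' : κ → ℝ} (h : ∀ i, ∃ j, F i = G j ∧ c' j ≤ c i) :
    ⨆ i, F i - (c i : EReal) ≤ ⨆ j, G j - (c' j : EReal) :=
  iSup_le fun i ↦
    let ⟨j, hFG, hc⟩ := h i
    le_iSup_of_le j (hFG ▸ EReal.sub_le_sub le_rfl (EReal.coe_le_coe hc))

namespace Seminorm

variable {E : Type*} [AddCommGroup E] [Module ℝ E] (N : Seminorm ℝ E)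

theorem exists_isMaxOn_closedBall [FiniteDimensional ℝ E] (hN : ∀ x, N x = 0 ↔ x = 0)
    (f : E →ₗ[ℝ] ℝ) : ∃ x₀ ∈ N.closedBall 0 1, IsMaxOn f (N.closedBall 0 1) x₀ := by
  let : Norm E := ⟨N⟩
  have core : NormedSpace.Core ℝ E :=
    { norm_nonneg := apply_nonneg N
      norm_smul := map_smul_eq_mul N
      norm_triangle := map_add_le_add N
      norm_eq_zero_iff := hN }
  let := NormedAddCommGroup.ofCore core
  let := NormedSpace.ofCore core
  have := FiniteDimensional.proper_real E
  have hball : N.closedBall 0 1 = Metric.closedBall (0 : E) 1 := by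
    ext x
    simp only [mem_closedBall_zero, Metric.mem_closedBall, dist_zero_right]
    rfl
  rw [hball]
  exact (isCompact_closedBall 0 1).exists_isMaxOn (Metric.nonempty_closedBall.2 zero_le_one)
    (LinearMap.continuous_of_finiteDimensional f).continuousOn

theorem abs_le_mul_of_isMaxOn_closedBall (hN : ∀ x, N x = 0 ↔ x = 0) {f : E →ₗ[ℝ] ℝ} {x₀ : E}
    (hx₀ : IsMaxOn f (N.closedBall 0 1) x₀) (w : E) : |f w| ≤ f x₀ * N w := by
  have hle : ∀ w, f w ≤ f x₀ * N w := by
    intro w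
    rcases eq_or_ne w 0 with rfl | hw
    · simp
    have hNw : 0 < N w := (apply_nonneg N w).lt_of_ne' (mt (hN w).1 hw)
    have hmem : (N w)⁻¹ • w ∈ N.closedBall 0 1 := by
      rw [mem_closedBall_zero, map_smul_eq_mul, Real.norm_eq_abs, abs_inv, abs_of_pos hNw,
        inv_mul_cancel₀ hNw.ne']
    have hscaled := isMaxOn_iff.1 hx₀ _ hmem
    rwa [map_smul, smul_eq_mul, inv_mul_le_iff₀ hNw, mul_comm] at hscaled
  have hneg := hle (-w)
  rw [map_neg, map_neg_eq_map] at hneg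
  exact abs_le.2 ⟨by linarith, hle w⟩

theorem iSup_sub_mul_rpow_eq_of_abs_le_mul {f : E →ₗ[ℝ] ℝ} {x₀ : E} (hx₀ : N x₀ ≤ 1)
    (hf : ∀ w, |f w| ≤ f x₀ * N w) (L : ℝ → EReal) {p lam : ℝ} (hp : 0 ≤ p) (hlam : 0 ≤ lam)
    (zhat : E) :
    ⨆ z, L (f z) - ((lam * N (z - zhat) ^ p : ℝ) : EReal) =
      ⨆ γ : ℝ, L (f zhat + γ * f x₀) - ((lam * |γ| ^ p : ℝ) : EReal) := by
  have hcost : ∀ {a b : ℝ}, 0 ≤ a → a ≤ b → lam * a ^ p ≤ lam * b ^ p := fun ha hab ↦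
    mul_le_mul_of_nonneg_left (Real.rpow_le_rpow ha hab hp) hlam
  refine le_antisymm (EReal.iSup_sub_coe_le_iSup_sub_coe fun z ↦ ?_)
    (EReal.iSup_sub_coe_le_iSup_sub_coe fun γ ↦ ⟨zhat + γ • x₀, ?_, ?_⟩)
  · have hz := hf (z - zhat)
    refine ⟨f (z - zhat) / f x₀, ?_, hcost (abs_nonneg _) ?_⟩
    · rw [div_mul_cancel_of_imp fun h ↦ abs_nonpos_iff.1 (by simpa [h] using hz), map_sub,
        add_sub_cancel]
    · rw [abs_div]
      refine div_le_of_le_mul₀ (abs_nonneg _) (apply_nonneg N _) ?_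
      rw [mul_comm]
      exact hz.trans (mul_le_mul_of_nonneg_right (le_abs_self _) (apply_nonneg N _))
  · rw [map_add, map_smul, smul_eq_mul]
  · rw [add_sub_cancel_left, map_smul_eq_mul, Real.norm_eq_abs]
    exact hcost (mul_nonneg (abs_nonneg γ) (apply_nonneg N x₀))
      (mul_le_of_le_one_right (abs_nonneg γ) hx₀)

end Seminorm

theorem dualNorm_eq_of_forall_dotp_le {d : ℕ} {N : (Fin d → ℝ) → ℝ} {θ x₀ : Fin d → ℝ}
    (hx₀ : N x₀ ≤ 1) (hmax : ∀ x, N x ≤ 1 → dotp θ x ≤ dotp θ x₀) : dualNorm N θ = dotp θ x₀ :=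
  IsGreatest.csSup_eq ⟨⟨x₀, hx₀, rfl⟩, by rintro _ ⟨x, hx, rfl⟩; exact hmax x hx⟩

theorem c_transform_norm_duality_general {d : ℕ}
    (N : (Fin d → ℝ) → ℝ)
    (hN0 : ∀ x, N x = 0 ↔ x = 0)
    (hNhom : ∀ (a : ℝ) x, N (a • x) = |a| * N x)
    (hNtri : ∀ x y, N (x + y) ≤ N x + N y)
    (p : ℝ) (hp : 1 ≤ p)
    (L : ℝ → EReal)
    (θ zhat : Fin d → ℝ) (lam : ℝ) (hlam : 0 ≤ lam) :
    (⨆ z : Fin d → ℝ, L (dotp θ z) - ((lam * N (z - zhat) ^ p : ℝ) : EReal)) =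
    (⨆ γ : ℝ, L (dotp θ zhat + γ * dualNorm N θ) - ((lam * |γ| ^ p : ℝ) : EReal)) := by
  let n : Seminorm ℝ (Fin d → ℝ) := Seminorm.of N hNtri hNhom
  -- `f x = θ ⬝ᵥ x` is definitionally `dotp θ x`.
  let f : (Fin d → ℝ) →ₗ[ℝ] ℝ := dotProductBilin ℝ ℝ θ
  obtain ⟨x₀, hx₀, hmax⟩ := n.exists_isMaxOn_closedBall hN0 f
  have hD : dualNorm N θ = dotp θ x₀ :=
    dualNorm_eq_of_forall_dotp_le (n.mem_closedBall_zero.1 hx₀) fun x hx ↦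
      isMaxOn_iff.1 hmax x (n.mem_closedBall_zero.2 hx)
  rw [hD]
  exact n.iSup_sub_mul_rpow_eq_of_abs_le_mul (n.mem_closedBall_zero.1 hx₀)
    (n.abs_le_mul_of_isMaxOn_closedBall hN0 hmax) L (by linarith) hlam zhat

/-- **Duality for the `c`-transform with norm-power transportation costs.**
For an arbitrary norm `‖·‖` on `ℝ^d`, exponent `p ≥ 1`, and proper `L : ℝ → (−∞, ∞]`,
`sup_z (L(⟨θ, z⟩) − λ ‖z − ẑ‖^p) = sup_γ (L(⟨θ, ẑ⟩ + γ‖θ‖_*) − λ|γ|^p)`. -/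
theorem c_transform_norm_duality {d : ℕ}
    (N : (Fin d → ℝ) → ℝ)
    (hN0 : ∀ x, N x = 0 ↔ x = 0)
    (hNhom : ∀ (a : ℝ) x, N (a • x) = |a| * N x)
    (hNtri : ∀ x y, N (x + y) ≤ N x + N y)
    (p : ℝ) (hp : 1 ≤ p)
    (L : ℝ → EReal)
    (hLproper : (∀ s, L s ≠ ⊥) ∧ (∃ s, L s ≠ ⊤))
    (θ zhat : Fin d → ℝ) (lam : ℝ) (hlam : 0 ≤ lam) :
    (⨆ z : Fin d → ℝ, L (dotp θ z) - ((lam * N (z - zhat) ^ p : ℝ) : EReal)) =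
    (⨆ γ : ℝ, L (dotp θ zhat + γ * dualNorm N θ) - ((lam * |γ| ^ p : ℝ) : EReal)) :=
  c_transform_norm_duality_general N hN0 hNhom hNtri p hp L θ zhat lam hlam
end
end

section
/- Let 𝒵 = ℝ^d, let ‖·‖ be a norm on ℝ^d with dual norm ‖θ‖_* = sup{⟨θ, x⟩ : ‖x‖ ≤ 1}, and let c(z, ẑ) = ‖z − ẑ‖. Let L : ℝ → ℝ be Lipschitz continuous with Lipschitz modulus Lip(L) = sup_{s ≠ s'} |L(s) − L(s')| / |s − s'|, and suppose limsup_{|s| → ∞} L(s)/|s| = Lip(L). Fix θ ∈ ℝ^d, suppose ẑ ↦ L(⟨θ, ẑ⟩) is P̂-integrable, and let ε > 0. Then sup_{Q ∈ B_ε(P̂)} ∫ L(⟨θ, z⟩) dQ(z) = ∫ L(⟨θ, ẑ⟩) dP̂(ẑ) + ε · Lip(L) · ‖θ‖_*. -/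
open MeasureTheory ENNReal NNReal Set Filter Topology

noncomputable section

/-- The Lipschitz modulus `Lip(L) = sup_{s ≠ s'} |L(s) − L(s')| / |s − s'|`
of a univariate function. -/
def lipMod (L : ℝ → ℝ) : ℝ :=
  sSup {r : ℝ | ∃ s t : ℝ, s ≠ t ∧ r = |L s - L t| / |s - t|}

/-!
Upper bound: `Lip(L) ‖θ‖_*` is a Lipschitz constant of `z ↦ L ⟨θ, z⟩` for `‖·‖`, so integrating
`L ⟨θ, z⟩ ≤ L ⟨θ, ẑ⟩ + Lip(L) ‖θ‖_* ‖z - ẑ‖` against a nearly optimal coupling bounds every `E_Q`.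

Lower bound: for `‖x‖ ≤ 1` with `a = ⟨θ, x⟩ > 0` and `|s|` large, move the fraction
`δ = ε a / |s|` of `P̂` by `(s / a) x`. This costs `ε ‖x‖ ≤ ε` and gives the expected loss
`(1 - δ) E L ⟨θ, ẑ⟩ + δ E L (⟨θ, ẑ⟩ + s)`. By dominated convergence
`E L (⟨θ, ẑ⟩ + s) = L s + o(|s|)`, so this is `E L ⟨θ, ẑ⟩ + ε a L(s) / |s| + o(1)`, and steepness
lets `L(s) / |s|` approach `Lip(L)`. The supremum over `x` then gives `‖θ‖_*`.
-/

section ereal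

variable {α : Type*} [MeasurableSpace α]

lemma eint_coe (μ : Measure α) (f : α → ℝ) :
    eint μ (fun a => (f a : EReal)) =
      ((∫⁻ a, ENNReal.ofReal (f a) ∂μ : ℝ≥0∞) : EReal) -
        (∫⁻ a, ENNReal.ofReal (-f a) ∂μ : ℝ≥0∞) := by
  simp only [eint, erealPos, EReal.coe_ne_top, ← EReal.coe_neg, if_false, EReal.toReal_coe]

lemma MeasureTheory.Integrable.lintegral_ofReal_ne_top {μ : Measure α} {f : α → ℝ}
    (hf : Integrable f μ) : ∫⁻ a, ENNReal.ofReal (f a) ∂μ ≠ ⊤ :=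
  ((lintegral_ofReal_le_lintegral_enorm f).trans_lt hf.2).ne

lemma eint_coe_of_integrable {μ : Measure α} {f : α → ℝ} (hf : Integrable f μ) :
    eint μ (fun a => (f a : EReal)) = ((∫ a, f a ∂μ : ℝ) : EReal) := by
  have hneg : ∫⁻ a, ENNReal.ofReal (-f a) ∂μ ≠ ⊤ := hf.neg.lintegral_ofReal_ne_top
  rw [eint_coe, integral_eq_lintegral_pos_part_sub_lintegral_neg_part hf, EReal.coe_sub,
    EReal.coe_ennreal_toReal hf.lintegral_ofReal_ne_top, EReal.coe_ennreal_toReal hneg]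

lemma EReal.coe_ennreal_sub_le_of_add_le {A B a b c : ℝ≥0∞} (ha : a ≠ ⊤) (hb : b ≠ ⊤)
    (hc : c ≠ ⊤) (h : A + b ≤ a + B + c) :
    (A : EReal) - B ≤ ((a.toReal - b.toReal + c.toReal : ℝ) : EReal) := by
  rcases eq_or_ne B ⊤ with rfl | hB
  · simp -- `A - ⊤ = ⊥` in `EReal`, even for `A = ⊤`
  have hA : A ≠ ⊤ := ne_top_of_le_ne_top (by finiteness) (le_self_add.trans h)
  rw [← EReal.coe_ennreal_toReal hA, ← EReal.coe_ennreal_toReal hB, ← EReal.coe_sub,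
    EReal.coe_le_coe_iff]
  have := ENNReal.toReal_mono (by finiteness) h
  rw [ENNReal.toReal_add hA hb, ENNReal.toReal_add (by finiteness) hc,
    ENNReal.toReal_add ha hB] at this
  linarith

end ereal

section transport

variable {α : Type*} [MeasurableSpace α]

lemma ENNReal.ofReal_add_ofReal_neg_le {u v w : ℝ} (h : u ≤ v + w) :
    ENNReal.ofReal u + ENNReal.ofReal (-v) ≤
      ENNReal.ofReal v + ENNReal.ofReal (-u) + ENNReal.ofReal w := by
  have key : max u 0 + max (-v) 0 ≤ max v 0 + max (-u) 0 + max w 0 := by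
    simp only [max_def]; split_ifs <;> linarith
  have hmax : ∀ x : ℝ, ENNReal.ofReal (max x 0) = ENNReal.ofReal x := by simp
  simpa only [ENNReal.ofReal_add, le_max_right, add_nonneg, hmax] using
    ENNReal.ofReal_le_ofReal key

lemma lintegral_ofReal_add_le_of_mem_couplings {Q P : Measure α} {π : Measure (α × α)}
    (hπ : π ∈ couplings Q P) {f : α → ℝ} (hf : Measurable f) {c : α → α → ℝ}
    (hfc : ∀ x y, f x ≤ f y + c x y) :
    ∫⁻ x, ENNReal.ofReal (f x) ∂Q + ∫⁻ y, ENNReal.ofReal (-f y) ∂P ≤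
      ∫⁻ y, ENNReal.ofReal (f y) ∂P + ∫⁻ x, ENNReal.ofReal (-f x) ∂Q +
        ∫⁻ p, ENNReal.ofReal (c p.1 p.2) ∂π := by
  obtain ⟨rfl, rfl⟩ := hπ
  have hpos : Measurable fun x => ENNReal.ofReal (f x) := hf.ennreal_ofReal
  have hneg : Measurable fun x => ENNReal.ofReal (-f x) := hf.neg.ennreal_ofReal
  have hpos₁ : Measurable fun p : α × α => ENNReal.ofReal (f p.1) := hpos.comp measurable_fst
  have hpos₂ : Measurable fun p : α × α => ENNReal.ofReal (f p.2) := hpos.comp measurable_snd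
  have hneg₁ : Measurable fun p : α × α => ENNReal.ofReal (-f p.1) := hneg.comp measurable_fst
  have hsum : Measurable fun p : α × α => ENNReal.ofReal (f p.2) + ENNReal.ofReal (-f p.1) :=
    hpos₂.add hneg₁
  rw [lintegral_map hpos measurable_fst, lintegral_map hneg measurable_snd,
    lintegral_map hpos measurable_snd, lintegral_map hneg measurable_fst,
    ← lintegral_add_left hpos₁, ← lintegral_add_left hpos₂,
    ← lintegral_add_left hsum]
  exact lintegral_mono fun p => ENNReal.ofReal_add_ofReal_neg_le (hfc p.1 p.2)

lemma eint_le_of_mem_couplings {Q P : Measure α} {π : Measure (α × α)}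
    (hπ : π ∈ couplings Q P) {f : α → ℝ} (hf : Measurable f) (hfP : Integrable f P)
    {c : α → α → ℝ} {C b : ℝ} (hC : 0 ≤ C) (hfc : ∀ x y, f x ≤ f y + C * c x y)
    (hb : 0 ≤ b) (hcost : ∫⁻ p, ENNReal.ofReal (c p.1 p.2) ∂π ≤ ENNReal.ofReal b) :
    eint Q (fun x => (f x : EReal)) ≤ ((∫ x, f x ∂P + C * b : ℝ) : EReal) := by
  have hcost' : ∫⁻ p, ENNReal.ofReal (C * c p.1 p.2) ∂π ≤ ENNReal.ofReal (C * b) := by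
    simp_rw [ENNReal.ofReal_mul hC]
    rw [lintegral_const_mul' _ _ ENNReal.ofReal_ne_top]
    gcongr
  have h := (lintegral_ofReal_add_le_of_mem_couplings hπ hf hfc).trans
    (add_le_add_right hcost' _)
  have hneg : ∫⁻ a, ENNReal.ofReal (-f a) ∂P ≠ ⊤ := hfP.neg.lintegral_ofReal_ne_top
  rw [eint_coe]
  refine (EReal.coe_ennreal_sub_le_of_add_le hfP.lintegral_ofReal_ne_top hneg
    ENNReal.ofReal_ne_top h).trans_eq ?_
  rw [integral_eq_lintegral_pos_part_sub_lintegral_neg_part hfP,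
    ENNReal.toReal_ofReal (mul_nonneg hC hb)]

lemma eint_le_of_mem_ambiguitySet {P Q : ProbabilityMeasure α} {c : α → α → ℝ} {ε : ℝ}
    (hε : 0 ≤ ε) (hQ : Q ∈ ambiguitySet (fun x y => ENNReal.ofReal (c x y)) P ε) {f : α → ℝ}
    (hf : Measurable f) (hfP : Integrable f P) {C : ℝ} (hC : 0 ≤ C)
    (hfc : ∀ x y, f x ≤ f y + C * c x y) :
    eint Q (fun x => (f x : EReal)) ≤ ((∫ x, f x ∂P + C * ε : ℝ) : EReal) := by
  have hcont : Continuous fun b : ℝ => ((∫ x, f x ∂P + C * b : ℝ) : EReal) :=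
    continuous_coe_real_ereal.comp (by fun_prop)
  refine ge_of_tendsto (hcont.tendsto ε |>.mono_left (nhdsWithin_le_nhds (s := Ioi ε))) ?_
  filter_upwards [self_mem_nhdsWithin] with b (hb : ε < b)
  obtain ⟨π, hπ, hcost⟩ :
      ∃ π ∈ couplings Q P, ∫⁻ p, ENNReal.ofReal (c p.1 p.2) ∂π < ENNReal.ofReal b := by
    simpa only [OTDiscrepancy, iInf_lt_iff, exists_prop] using
      hQ.trans_lt ((ENNReal.ofReal_lt_ofReal_iff (hε.trans_lt hb)).2 hb)
  exact eint_le_of_mem_couplings hπ hf hfP hC hfc (hε.trans hb.le) hcost.le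

end transport

section mixture

variable {E : Type*} [MeasurableSpace E] [AddGroup E] [MeasurableAdd E]

def shiftMixture (P : Measure E) (v : E) (δ : ℝ) : Measure E :=
  ENNReal.ofReal (1 - δ) • P + ENNReal.ofReal δ • P.map (· + v)

variable {δ : ℝ}

lemma ENNReal.ofReal_one_sub_add_ofReal (hδ₀ : 0 ≤ δ) (hδ₁ : δ ≤ 1) :
    ENNReal.ofReal (1 - δ) + ENNReal.ofReal δ = 1 := by
  rw [← ENNReal.ofReal_add (by linarith) hδ₀, sub_add_cancel, ENNReal.ofReal_one]

lemma isProbabilityMeasure_shiftMixture (hδ₀ : 0 ≤ δ) (hδ₁ : δ ≤ 1) (P : Measure E)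
    [IsProbabilityMeasure P] (v : E) :
    IsProbabilityMeasure (shiftMixture P v δ) := by
  have := Measure.isProbabilityMeasure_map (μ := P) (measurable_add_const v).aemeasurable
  constructor
  simp [shiftMixture, ENNReal.ofReal_one_sub_add_ofReal hδ₀ hδ₁]

lemma OTDiscrepancy_shiftMixture_le (hδ₀ : 0 ≤ δ) (hδ₁ : δ ≤ 1) {c : E → E → ℝ≥0∞}
    (hc : ∀ z, c z z = 0) (P : Measure E) (v : E) :
    OTDiscrepancy c (shiftMixture P v δ) P ≤ ENNReal.ofReal δ * ∫⁻ z, c (z + v) z ∂P := by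
  have hdiag : Measurable fun z : E => (z, z) := measurable_id.prodMk measurable_id
  have hshift : Measurable fun z : E => (z + v, z) :=
    (measurable_add_const v).prodMk measurable_id
  let π := ENNReal.ofReal (1 - δ) • P.map (fun z => (z, z)) +
    ENNReal.ofReal δ • P.map (fun z => (z + v, z))
  have hπ : π ∈ couplings (shiftMixture P v δ) P := by
    constructor
    · simp only [π, shiftMixture, Measure.map_add _ _ measurable_fst, Measure.map_smul,
        Measure.map_map measurable_fst hdiag, Measure.map_map measurable_fst hshift]
      rw [show Prod.fst ∘ (fun z : E => (z, z)) = id from rfl, Measure.map_id]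
      rfl
    · simp only [π, Measure.map_add _ _ measurable_snd, Measure.map_smul,
        Measure.map_map measurable_snd hdiag, Measure.map_map measurable_snd hshift]
      rw [show Prod.snd ∘ (fun z : E => (z + v, z)) = id from rfl,
        show Prod.snd ∘ (fun z : E => (z, z)) = id from rfl, Measure.map_id, ← add_smul,
        ENNReal.ofReal_one_sub_add_ofReal hδ₀ hδ₁, one_smul]
  calc OTDiscrepancy c (shiftMixture P v δ) P ≤ ∫⁻ p, c p.1 p.2 ∂π := iInf₂_le π hπ
    _ ≤ ENNReal.ofReal (1 - δ) * ∫⁻ z, c z z ∂P + ENNReal.ofReal δ * ∫⁻ z, c (z + v) z ∂P := by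
      rw [lintegral_add_measure, lintegral_smul_measure, lintegral_smul_measure]
      simp only [smul_eq_mul]
      gcongr <;> exact lintegral_map_le (fun p : E × E => c p.1 p.2) _
    _ = ENNReal.ofReal δ * ∫⁻ z, c (z + v) z ∂P := by simp [hc]

lemma integrable_shiftMixture {P : Measure E} {v : E} {f : E → ℝ} (hf : Integrable f P)
    (hfv : Integrable (fun z => f (z + v)) P) : Integrable f (shiftMixture P v δ) :=
  (hf.smul_measure ENNReal.ofReal_ne_top).add_measure
    (((measurableEmbedding_addRight v).integrable_map_iff.2 hfv).smul_measure
      ENNReal.ofReal_ne_top)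

lemma integral_shiftMixture (hδ₀ : 0 ≤ δ) (hδ₁ : δ ≤ 1) {P : Measure E} {v : E} {f : E → ℝ}
    (hf : Integrable f P) (hfv : Integrable (fun z => f (z + v)) P) :
    ∫ z, f z ∂(shiftMixture P v δ) = (1 - δ) * ∫ z, f z ∂P + δ * ∫ z, f (z + v) ∂P := by
  rw [shiftMixture, integral_add_measure (hf.smul_measure ENNReal.ofReal_ne_top)
    (((measurableEmbedding_addRight v).integrable_map_iff.2 hfv).smul_measure
      ENNReal.ofReal_ne_top), integral_smul_measure, integral_smul_measure,
    (measurableEmbedding_addRight v).integral_map, ENNReal.toReal_ofReal hδ₀,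
    ENNReal.toReal_ofReal (by linarith), smul_eq_mul, smul_eq_mul]

end mixture

section lipschitz

variable {L : ℝ → ℝ} {K : ℝ≥0}

lemma lipMod_nonneg (L : ℝ → ℝ) : 0 ≤ lipMod L :=
  Real.sSup_nonneg fun _ ⟨_, _, _, hr⟩ => hr ▸ by positivity

lemma LipschitzWith.abs_sub_le_lipMod_mul (hL : LipschitzWith K L) (s t : ℝ) :
    |L s - L t| ≤ lipMod L * |s - t| := by
  rcases eq_or_ne s t with rfl | hst
  · simp
  have hpos : 0 < |s - t| := abs_pos.2 (sub_ne_zero.2 hst)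
  have hbdd : BddAbove {r | ∃ s t : ℝ, s ≠ t ∧ r = |L s - L t| / |s - t|} := by
    refine ⟨K, ?_⟩
    rintro _ ⟨s, t, hst, rfl⟩
    rw [div_le_iff₀ (abs_pos.2 (sub_ne_zero.2 hst))]
    simpa [Real.dist_eq] using hL.dist_le_mul s t
  rw [← div_le_iff₀ hpos]
  exact le_csSup hbdd ⟨s, t, hst, rfl⟩

instance : (comap (fun s : ℝ => |s|) atTop).NeBot := by
  rw [comap_abs_atTop]
  infer_instance

lemma LipschitzWith.isCoboundedUnder_le_div_abs (hL : LipschitzWith K L) :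
    IsCoboundedUnder (· ≤ ·) (comap (fun s : ℝ => |s|) atTop) (fun s => L s / |s|) := by
  refine isCoboundedUnder_le_of_eventually_le _ (x := -(K + |L 0|)) ?_
  filter_upwards [tendsto_comap.eventually_ge_atTop 1] with s hs
  have h := hL.dist_le_mul s 0
  rw [Real.dist_eq, Real.dist_eq, sub_zero] at h
  rw [le_div_iff₀ (by linarith)]
  nlinarith [neg_abs_le (L s - L 0), neg_abs_le (L 0), abs_nonneg (L 0)]

variable {α : Type*} [MeasurableSpace α] {μ : Measure α} {X : α → ℝ}

lemma LipschitzWith.integrable_comp_add_const [IsFiniteMeasure μ] (hL : LipschitzWith K L)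
    (hX : AEStronglyMeasurable X μ) (hLX : Integrable (fun a => L (X a)) μ) (s : ℝ) :
    Integrable (fun a => L (X a + s)) μ := by
  refine (hLX.norm.add (integrable_const (K * |s|))).mono'
    (hL.continuous.comp_aestronglyMeasurable (hX.add_const s)) (ae_of_all _ fun a => ?_)
  have h := hL.dist_le_mul (X a + s) (X a)
  rw [Real.dist_eq, Real.dist_eq, add_sub_cancel_left] at h
  simp only [Pi.add_apply, Real.norm_eq_abs]
  linarith [abs_sub_abs_le_abs_sub (L (X a + s)) (L (X a))]

lemma LipschitzWith.tendsto_integral_comp_add_sub_div_abs [IsProbabilityMeasure μ]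
    (hL : LipschitzWith K L) (hX : AEStronglyMeasurable X μ)
    (hLX : Integrable (fun a => L (X a)) μ) :
    Tendsto (fun s => (∫ a, L (X a + s) ∂μ - L s) / |s|) (comap (fun s : ℝ => |s|) atTop)
      (𝓝 0) := by
  have hrw : ∀ s, (∫ a, L (X a + s) ∂μ - L s) / |s| = ∫ a, (L (X a + s) - L s) / |s| ∂μ :=
    fun s => by
      rw [integral_div, integral_sub (hL.integrable_comp_add_const hX hLX s) (integrable_const _),
        integral_const, probReal_univ, one_smul]
  simp_rw [hrw]
  rw [← integral_zero α ℝ]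
  refine tendsto_integral_filter_of_dominated_convergence (fun a => |L (X a)| + |L 0| + 2 * K)
    (Eventually.of_forall fun s =>
      (((hL.integrable_comp_add_const hX hLX s).sub (integrable_const (L s))).div_const
        |s|).aestronglyMeasurable) ?_
    ((hLX.abs.add (integrable_const _)).add (integrable_const _)) (ae_of_all _ fun a => ?_)
  · filter_upwards [tendsto_comap.eventually_ge_atTop 1] with s hs
    refine ae_of_all _ fun a => ?_
    have h₁ := hL.dist_le_mul (X a + s) (X a)
    have h₂ := hL.dist_le_mul s 0
    simp only [Real.dist_eq, add_sub_cancel_left, sub_zero] at h₁ h₂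
    rw [Real.norm_eq_abs, abs_div, abs_abs, div_le_iff₀ (by linarith)]
    have := abs_sub_abs_le_abs_sub (L (X a + s)) (L (X a))
    have := abs_sub_abs_le_abs_sub (L s) (L 0)
    nlinarith [abs_sub (L (X a + s)) (L s), abs_nonneg (L (X a)), abs_nonneg (L 0)]
  · have hlim : Tendsto (fun s : ℝ => K * |X a| * |s|⁻¹) (comap (fun s : ℝ => |s|) atTop)
        (𝓝 0) := by
      have := (tendsto_inv_atTop_zero (𝕜 := ℝ)).comp (tendsto_comap (f := fun s : ℝ => |s|))
      simpa only [mul_zero, Function.comp_def] using this.const_mul ((K : ℝ) * |X a|)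
    refine squeeze_zero_norm (fun s => ?_) hlim
    have h := hL.dist_le_mul (X a + s) s
    rw [Real.dist_eq, Real.dist_eq, add_sub_cancel_right] at h
    rw [Real.norm_eq_abs, abs_div, abs_abs, div_eq_mul_inv]
    exact mul_le_mul_of_nonneg_right (by linarith [abs_nonneg (X a)]) (by positivity)

end lipschitz

lemma Filter.frequently_lt_add_mul_of_lt_add_mul_limsup {β : Type*} {l : Filter β} {u w : β → ℝ}
    {I c z : ℝ} (hu : Tendsto u l (𝓝 I)) (hw : IsCoboundedUnder (· ≤ ·) l w) (hc : 0 < c)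
    (hz : z < I + c * limsup w l) : ∃ᶠ s in l, z < u s + c * w s := by
  set η := I + c * limsup w l - z with hη_def
  have hη : 0 < η := by linarith
  have hu' : ∀ᶠ s in l, I - η / 2 < u s := hu.eventually (lt_mem_nhds (by linarith))
  have hw' : ∃ᶠ s in l, limsup w l - η / (2 * c) < w s :=
    frequently_lt_of_lt_limsup hw (by linarith [div_pos hη (mul_pos two_pos hc)])
  refine (hw'.and_eventually hu').mono fun s ⟨hws, hus⟩ => ?_
  have hcw := mul_lt_mul_of_pos_left hws hc
  rw [mul_sub, show c * (η / (2 * c)) = η / 2 by field_simp] at hcw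
  linarith

section dual

variable {d : ℕ}

lemma dotp_add (θ x y : Fin d → ℝ) : dotp θ (x + y) = dotp θ x + dotp θ y := dotProduct_add θ x y

lemma dotp_sub (θ x y : Fin d → ℝ) : dotp θ (x - y) = dotp θ x - dotp θ y := dotProduct_sub θ x y

lemma dotp_smul (θ : Fin d → ℝ) (a : ℝ) (x : Fin d → ℝ) : dotp θ (a • x) = a * dotp θ x :=
  dotProduct_smul a θ x

lemma continuous_dotp (θ : Fin d → ℝ) : Continuous (dotp θ) := by
  unfold dotp; fun_prop

lemma Seminorm.exists_norm_le_of_le_one {E : Type*} [NormedAddCommGroup E] [NormedSpace ℝ E]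
    [FiniteDimensional ℝ E] (p : Seminorm ℝ E) (hp : ∀ x, p x = 0 → x = 0) :
    ∃ R, ∀ x, p x ≤ 1 → ‖x‖ ≤ R := by
  have hpos : ∀ y ∈ Metric.sphere (0 : E) 1, 0 < p y := fun y hy =>
    (apply_nonneg p y).lt_of_ne' fun h => by simp [hp y h] at hy
  obtain ⟨m, hm, hmp⟩ := (isCompact_sphere (0 : E) 1).exists_forall_le'
    p.convexOn.locallyLipschitz.continuous.continuousOn hpos
  refine ⟨m⁻¹, fun x hx => ?_⟩
  rcases eq_or_ne x 0 with rfl | hx0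
  · simpa using hm.le
  have hnx : 0 < ‖x‖ := norm_pos_iff.2 hx0
  have h := hmp (‖x‖⁻¹ • x) (by simp [norm_smul, hnx.ne'])
  rw [map_smul_eq_mul, norm_inv, norm_norm] at h
  exact (le_inv_comm₀ hm hnx).1
    (h.trans (by simpa using mul_le_mul_of_nonneg_left hx (inv_nonneg.2 hnx.le)))

variable (p : Seminorm ℝ (Fin d → ℝ)) (θ : Fin d → ℝ)

lemma bddAbove_dotp_unitBall (hp : ∀ x, p x = 0 → x = 0) :
    BddAbove {r | ∃ x, p x ≤ 1 ∧ r = dotp θ x} := by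
  obtain ⟨R, hR⟩ := p.exists_norm_le_of_le_one hp
  refine ((isCompact_closedBall 0 R).bddAbove_image (continuous_dotp θ).continuousOn).mono ?_
  rintro _ ⟨x, hx, rfl⟩
  exact ⟨x, mem_closedBall_zero_iff.2 (hR x hx), rfl⟩

lemma dotp_le_dualNorm_mul (hp : ∀ x, p x = 0 → x = 0) (x : Fin d → ℝ) :
    dotp θ x ≤ dualNorm p θ * p x := by
  rcases (apply_nonneg p x).eq_or_lt' with h | hpx
  · simp [hp x h, dotp]
  have h := le_csSup (bddAbove_dotp_unitBall p θ hp) ⟨(p x)⁻¹ • x, by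
    rw [map_smul_eq_mul, Real.norm_eq_abs, abs_inv, abs_of_pos hpx, inv_mul_cancel₀ hpx.ne'], rfl⟩
  rw [dotp_smul, inv_mul_le_iff₀ hpx, mul_comm] at h
  exact h

lemma abs_dotp_le_dualNorm_mul (hp : ∀ x, p x = 0 → x = 0) (x : Fin d → ℝ) :
    |dotp θ x| ≤ dualNorm p θ * p x := by
  refine abs_le.2 ⟨?_, dotp_le_dualNorm_mul p θ hp x⟩
  have h := dotp_le_dualNorm_mul p θ hp (-x)
  rw [map_neg_eq_map, ← neg_one_smul ℝ x, dotp_smul] at h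
  linarith

lemma dualNorm_nonneg (hp : ∀ x, p x = 0 → x = 0) : 0 ≤ dualNorm p θ :=
  le_csSup (bddAbove_dotp_unitBall p θ hp) ⟨0, by simp, by simp [dotp]⟩

end dual

def worstCaseExpectation {E : Type*} [MeasurableSpace E] [Sub E] (N : E → ℝ)
    (P : ProbabilityMeasure E) (ε : ℝ) (f : E → ℝ) : EReal :=
  ⨆ Q ∈ ambiguitySet (fun z w => ENNReal.ofReal (N (z - w))) P ε, eint Q (fun z => (f z : EReal))

section regularization

variable {d : ℕ} (p : Seminorm ℝ (Fin d → ℝ)) (hp : ∀ x, p x = 0 → x = 0)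
  {L : ℝ → ℝ} {K : ℝ≥0} (hL : LipschitzWith K L) {P : ProbabilityMeasure (Fin d → ℝ)}
  (θ : Fin d → ℝ) (hint : Integrable (fun z => L (dotp θ z)) P)

include hp hL in
lemma LipschitzWith.comp_dotp_le_add (x y : Fin d → ℝ) :
    L (dotp θ x) ≤ L (dotp θ y) + lipMod L * dualNorm p θ * p (x - y) := by
  have h₁ := hL.abs_sub_le_lipMod_mul (dotp θ x) (dotp θ y)
  have h₂ := mul_le_mul_of_nonneg_left (abs_dotp_le_dualNorm_mul p θ hp (x - y)) (lipMod_nonneg L)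
  rw [dotp_sub] at h₂
  linarith [le_abs_self (L (dotp θ x) - L (dotp θ y))]

include hp hL hint in
lemma worstCaseExpectation_le {ε : ℝ} (hε : 0 ≤ ε) :
    worstCaseExpectation p P ε (fun z => L (dotp θ z)) ≤
      ((∫ z, L (dotp θ z) ∂P + ε * lipMod L * dualNorm p θ : ℝ) : EReal) := by
  refine iSup₂_le fun Q hQ => ?_
  have h := eint_le_of_mem_ambiguitySet hε hQ (hL.continuous.comp (continuous_dotp θ)).measurable
    hint (mul_nonneg (lipMod_nonneg L) (dualNorm_nonneg p θ hp)) (hL.comp_dotp_le_add p hp θ)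
  rwa [mul_comm (lipMod L * dualNorm p θ), ← mul_assoc] at h

include hL hint in
lemma shiftMixture_le_worstCaseExpectation {ε δ : ℝ} (hδ₀ : 0 ≤ δ) (hδ₁ : δ ≤ 1) {v : Fin d → ℝ}
    (hv : δ * p v ≤ ε) :
    (((1 - δ) * ∫ z, L (dotp θ z) ∂P + δ * ∫ z, L (dotp θ z + dotp θ v) ∂P : ℝ) : EReal) ≤
      worstCaseExpectation p P ε (fun z => L (dotp θ z)) := by
  have hprob := isProbabilityMeasure_shiftMixture hδ₀ hδ₁ (P : Measure (Fin d → ℝ)) v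
  have hc : ∀ z : Fin d → ℝ, ENNReal.ofReal (p (z - z)) = 0 := fun z => by simp
  have hOT := OTDiscrepancy_shiftMixture_le (c := fun z w => ENNReal.ofReal (p (z - w))) hδ₀ hδ₁
      hc (P : Measure (Fin d → ℝ)) v
  simp only [add_sub_cancel_left, lintegral_const, measure_univ, mul_one,
      ← ENNReal.ofReal_mul hδ₀] at hOT
  have hQ : (⟨shiftMixture P v δ, hprob⟩ : ProbabilityMeasure (Fin d → ℝ)) ∈
      ambiguitySet (fun z w => ENNReal.ofReal (p (z - w))) P ε :=
    hOT.trans (ENNReal.ofReal_le_ofReal hv)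
  have hshift : Integrable (fun z => L (dotp θ (z + v))) P := by
    simpa only [dotp_add] using
      hL.integrable_comp_add_const (continuous_dotp θ).aestronglyMeasurable hint (dotp θ v)
  refine le_iSup₂_of_le _ hQ (le_of_eq ?_)
  rw [ProbabilityMeasure.coe_mk, eint_coe_of_integrable (integrable_shiftMixture hint hshift),
    integral_shiftMixture hδ₀ hδ₁ hint hshift]
  simp only [dotp_add]

include hL hint in
lemma shift_le_worstCaseExpectation {ε : ℝ} (hε : 0 < ε) {x : Fin d → ℝ} (hx : p x ≤ 1)
    (ha : 0 < dotp θ x) {s : ℝ} (hs : ε * dotp θ x ≤ |s|) :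
    (((1 - ε * dotp θ x / |s|) * ∫ z, L (dotp θ z) ∂P +
        ε * dotp θ x / |s| * ∫ z, L (dotp θ z + s) ∂P : ℝ) : EReal) ≤
      worstCaseExpectation p P ε (fun z => L (dotp θ z)) := by
  have hs₀ : 0 < |s| := (mul_pos hε ha).trans_le hs
  have hv : ε * dotp θ x / |s| * p ((s / dotp θ x) • x) ≤ ε := by
    rw [map_smul_eq_mul, Real.norm_eq_abs, abs_div, abs_of_pos ha]
    calc ε * dotp θ x / |s| * (|s| / dotp θ x * p x) = ε * p x := by field_simp
      _ ≤ ε := mul_le_of_le_one_right hε.le hx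
  convert shiftMixture_le_worstCaseExpectation p hL θ hint (by positivity)
    ((div_le_one hs₀).2 hs) hv using 5
  rw [dotp_smul, div_mul_cancel₀ _ ha.ne']

include hL hint in
lemma add_mul_dotp_le_worstCaseExpectation
    (hsteep : limsup (fun s => L s / |s|) (comap (fun s : ℝ => |s|) atTop) = lipMod L)
    {ε : ℝ} (hε : 0 < ε) {x : Fin d → ℝ} (hx : p x ≤ 1) :
    ((∫ z, L (dotp θ z) ∂P + ε * lipMod L * dotp θ x : ℝ) : EReal) ≤
      worstCaseExpectation p P ε (fun z => L (dotp θ z)) := by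
  set I := ∫ z, L (dotp θ z) ∂P
  set a := dotp θ x
  rcases le_or_gt a 0 with ha | ha
  · have hδ := shiftMixture_le_worstCaseExpectation p hL θ hint (δ := 0) le_rfl zero_le_one
      (v := 0) (by simpa using hε.le)
    refine le_trans (EReal.coe_le_coe_iff.2 ?_) hδ
    nlinarith [mul_nonneg hε.le (lipMod_nonneg L)]
  refine EReal.ge_of_forall_gt_iff_ge.1 fun r hr => ?_
  rw [EReal.coe_lt_coe_iff] at hr
  -- the value of the shifted mixture is `u s + ε a (L s / |s|)`, and `u s → I`
  have hu : Tendsto (fun s => I + ε * a * ((∫ z, L (dotp θ z + s) ∂P - L s) / |s| - I * |s|⁻¹))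
      (comap (fun s : ℝ => |s|) atTop) (𝓝 I) := by
    have h₁ := hL.tendsto_integral_comp_add_sub_div_abs
      (continuous_dotp θ).aestronglyMeasurable hint
    have h₂ := ((tendsto_inv_atTop_zero (𝕜 := ℝ)).comp
      (tendsto_comap (f := fun s : ℝ => |s|))).const_mul I
    simpa using ((h₁.sub h₂).const_mul (ε * a)).const_add I
  obtain ⟨s, hrs, hs⟩ := ((frequently_lt_add_mul_of_lt_add_mul_limsup (z := r) hu
    hL.isCoboundedUnder_le_div_abs (mul_pos hε ha) (by rw [hsteep]; linarith)).and_eventually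
    (tendsto_comap.eventually_ge_atTop (ε * a))).exists
  refine (EReal.coe_le_coe_iff.2 hrs.le).trans (le_of_eq_of_le ?_
    (shift_le_worstCaseExpectation p hL θ hint hε hx ha hs))
  have hs₀ : 0 < |s| := (mul_pos hε ha).trans_le hs
  congr 1
  field_simp
  ring

include hp hL hint in
lemma add_mul_dualNorm_le_worstCaseExpectation
    (hsteep : limsup (fun s => L s / |s|) (comap (fun s : ℝ => |s|) atTop) = lipMod L)
    {ε : ℝ} (hε : 0 < ε) :
    ((∫ z, L (dotp θ z) ∂P + ε * lipMod L * dualNorm p θ : ℝ) : EReal) ≤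
      worstCaseExpectation p P ε (fun z => L (dotp θ z)) := by
  have hclosed : IsClosed {r : ℝ | ((∫ z, L (dotp θ z) ∂P + ε * lipMod L * r : ℝ) : EReal) ≤
      worstCaseExpectation p P ε (fun z => L (dotp θ z))} :=
    isClosed_le (continuous_coe_real_ereal.comp (by fun_prop)) continuous_const
  refine closure_minimal ?_ hclosed
    (csSup_mem_closure ⟨0, 0, by simp, by simp [dotp]⟩ (bddAbove_dotp_unitBall p θ hp))
  rintro _ ⟨x, hx, rfl⟩
  exact add_mul_dotp_le_worstCaseExpectation p hL θ hint hsteep hε hx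

end regularization

/-- **Exact Lipschitz regularization for asymptotically steep losses.**
If the Lipschitz continuous loss `L` has asymptotic linear growth rate equal to its
Lipschitz modulus, then the worst-case expected loss over the ambiguity set with cost
`c(z, ẑ) = ‖z − ẑ‖` equals the nominal expected loss plus `ε · Lip(L) · ‖θ‖_*`. -/
theorem exact_lipschitz_regularization {d : ℕ}
    (N : (Fin d → ℝ) → ℝ)
    (hN0 : ∀ x, N x = 0 ↔ x = 0)
    (hNhom : ∀ (a : ℝ) x, N (a • x) = |a| * N x)
    (hNtri : ∀ x y, N (x + y) ≤ N x + N y)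
    (L : ℝ → ℝ)
    (hLlip : ∃ K : ℝ, ∀ s t : ℝ, |L s - L t| ≤ K * |s - t|)
    (hsteep : Filter.limsup (fun s : ℝ => L s / |s|)
      (Filter.comap (fun s : ℝ => |s|) Filter.atTop) = lipMod L)
    (Phat : ProbabilityMeasure (Fin d → ℝ))
    (θ : Fin d → ℝ)
    (hint : Integrable (fun zhat => L (dotp θ zhat)) Phat.toMeasure)
    (ε : ℝ) (hε : 0 < ε) :
    (⨆ Q ∈ ambiguitySet
        (fun z zhat : Fin d → ℝ => ENNReal.ofReal (N (z - zhat))) Phat ε,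
      eint Q.toMeasure (fun z => ((L (dotp θ z) : ℝ) : EReal))) =
    (((∫ zhat, L (dotp θ zhat) ∂Phat.toMeasure) + ε * lipMod L * dualNorm N θ : ℝ) :
      EReal) := by
  obtain ⟨K, hK⟩ := hLlip
  have hL : LipschitzWith K.toNNReal L := .of_dist_le' (by simpa only [Real.dist_eq] using hK)
  let p : Seminorm ℝ (Fin d → ℝ) := .of N hNtri fun a x => by rw [hNhom, Real.norm_eq_abs]
  have hp : ∀ x, p x = 0 → x = 0 := fun x => (hN0 x).1
  change worstCaseExpectation p Phat ε (fun z => L (dotp θ z)) =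
    ((_ + ε * lipMod L * dualNorm p θ : ℝ) : EReal)
  exact le_antisymm (worstCaseExpectation_le p hp hL θ hint hε.le)
    (add_mul_dualNorm_le_worstCaseExpectation p hp hL θ hint hsteep hε)
end
end

section
/- Let L : ℝ → ℝ be convex and differentiable with derivative L', M-smooth in the sense that |L'(s₁) − L'(s₂)| ≤ M |s₁ − s₂| for all s₁, s₂ ∈ ℝ, and with quadratic growth rate G = inf{g ≥ 0 : sup_{s∈ℝ} L(s) − g s² < ∞}. Fix θ, ẑ ∈ ℝ^d and λ ≥ 0, and consider the problem sup_{γ ∈ ℝ} φ(γ), where φ(γ) = L(⟨θ, ẑ⟩ + γ ‖θ‖_*) − λ γ². Then: (i) if λ < G ‖θ‖_*², the supremum equals +∞; (ii) if λ > G ‖θ‖_*², the supremum is finite and attained, and every maximizer γ* satisfies |γ*| ≥ (‖θ‖_* / (2λ)) |L'(⟨θ, ẑ⟩)|; (iii) if λ > M ‖θ‖_*² / 2, then φ is concave and has a unique maximizer. -/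
open Set

noncomputable section

/-!
Write `φ γ = F γ - λ γ²` with `F γ = L (⟨θ, ẑ⟩ + γ ‖θ‖_*)`. The function `F` is convex, its
derivative is `M ‖θ‖_*²`-Lipschitz, and `F γ - c γ²` is bounded above when `c > G ‖θ‖_*²` and
unbounded above when `c < G ‖θ‖_*²`: this gives (i), and coercivity, hence a maximizer, in (ii). At a maximizer `γ*` the tangent lines of `F` at `γ*` and at `0`
squeeze `φ (F' 0 / (2 λ)) ≤ φ γ*` into `(F' 0 / (2 λ))² ≤ γ*²`. Smoothness bounds `L` by its tangent
plus `M s² / 2`, so `G ≤ M / 2`, and makes `φ'` strictly decreasing once `2 λ > M ‖θ‖_*²`.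
-/

open Filter

theorem ConvexOn.add_deriv_mul_sub_le {f : ℝ → ℝ} {d x : ℝ} (hf : ConvexOn ℝ univ f)
    (hx : HasDerivAt f d x) (y : ℝ) : f x + d * (y - x) ≤ f y := by
  rcases lt_trichotomy x y with hxy | rfl | hyx
  · have h := hf.le_slope_of_hasDerivAt (mem_univ x) (mem_univ y) hxy hx
    rw [slope_def_field, le_div_iff₀ (sub_pos.2 hxy)] at h
    linarith
  · simp
  · have h := hf.slope_le_of_hasDerivAt (mem_univ y) (mem_univ x) hyx hx
    rw [slope_def_field, div_le_iff₀ (sub_pos.2 hyx)] at h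
    linarith

theorem le_add_deriv_mul_sub_add_sq_of_lipschitz {f f' : ℝ → ℝ} {M : ℝ}
    (hf : ∀ x, HasDerivAt f (f' x) x) (hM : ∀ s t, |f' s - f' t| ≤ M * |s - t|) (x y : ℝ) :
    f y ≤ f x + f' x * (y - x) + M / 2 * (y - x) ^ 2 := by
  have hg : ∀ s, HasDerivAt (fun s => M / 2 * s ^ 2 - f s) (M * s - f' s) s := fun s =>
    (((hasDerivAt_pow 2 s).const_mul (M / 2)).sub (hf s)).congr_deriv (by push_cast; ring)
  have hmono : Monotone fun s => M * s - f' s := fun s t hst => by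
    have h := (le_abs_self _).trans (hM t s)
    rw [abs_of_nonneg (sub_nonneg.2 hst)] at h
    linarith
  have hconv : ConvexOn ℝ univ fun s => M / 2 * s ^ 2 - f s :=
    Monotone.convexOn_univ_of_deriv (fun s => (hg s).differentiableAt)
      (by rwa [show deriv _ = _ from funext fun s => (hg s).deriv])
  have h := hconv.add_deriv_mul_sub_le (hg x) y
  linear_combination h

theorem bddAbove_range_quadratic {a : ℝ} (ha : a < 0) (b c : ℝ) :
    BddAbove (range fun x => a * x ^ 2 + b * x + c) := by
  refine ⟨c - b ^ 2 / (4 * a), ?_⟩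
  rintro _ ⟨x, rfl⟩
  have h : a * x ^ 2 + b * x ≤ -b ^ 2 / (4 * a) := by
    rw [le_div_iff_of_neg (by linarith)]
    nlinarith [sq_nonneg (2 * a * x + b)]
  simp only
  linarith [neg_div (4 * a) (b ^ 2)]

theorem BddAbove.comp_affine_sub_sq {f : ℝ → ℝ} {g c : ℝ}
    (hf : BddAbove (range fun s => f s - g * s ^ 2)) (a n : ℝ) (hc : g * n ^ 2 < c) :
    BddAbove (range fun γ => f (a + γ * n) - c * γ ^ 2) := by
  obtain ⟨B, hB⟩ := hf
  obtain ⟨B', hB'⟩ := bddAbove_range_quadratic (sub_neg.2 hc) (2 * g * a * n) (g * a ^ 2)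
  refine ⟨B + B', ?_⟩
  rintro _ ⟨γ, rfl⟩
  have h := hB ⟨a + γ * n, rfl⟩
  have h' := hB' ⟨γ, rfl⟩
  simp only at h h' ⊢
  linear_combination h + h'

theorem exists_forall_sub_sq_le {F : ℝ → ℝ} {c lam : ℝ} (hF : Continuous F)
    (hbdd : BddAbove (range fun γ => F γ - c * γ ^ 2)) (hc : c < lam) :
    ∃ γs, ∀ γ, F γ - lam * γ ^ 2 ≤ F γs - lam * γs ^ 2 := by
  obtain ⟨B, hB⟩ := hbdd
  refine (by fun_prop : Continuous fun γ => F γ - lam * γ ^ 2).exists_forall_ge ?_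
  refine tendsto_atBot_mono (fun γ => ?_ : ∀ γ, _ ≤ B - (lam - c) * ‖γ‖ ^ 2) ?_
  · have h := hB ⟨γ, rfl⟩
    simp only [Real.norm_eq_abs, sq_abs] at h ⊢
    linarith
  · exact tendsto_atBot_add_const_left _ _ <| tendsto_neg_atTop_atBot.comp <|
      ((tendsto_pow_atTop two_ne_zero).comp tendsto_norm_cocompact_atTop).const_mul_atTop
        (sub_pos.2 hc)

theorem EReal.iSup_coe_eq_top_of_not_bddAbove {ι : Type*} {f : ι → ℝ}
    (hf : ¬BddAbove (range f)) : ⨆ i, (f i : EReal) = ⊤ := by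
  rw [iSup_eq_top]
  intro b hb
  obtain ⟨x, hbx, -⟩ := EReal.exists_between_coe_real hb
  obtain ⟨_, ⟨i, rfl⟩, hi⟩ := not_bddAbove_iff.mp hf x
  exact ⟨i, hbx.trans (EReal.coe_lt_coe_iff.mpr hi)⟩

/-- `sInf (quadraticGrowthRates f)` is the quadratic growth rate `G` of `f`. -/
def quadraticGrowthRates (f : ℝ → ℝ) : Set ℝ :=
  {g | 0 ≤ g ∧ BddAbove (range fun s => f s - g * s ^ 2)}

section QuadraticGrowth

variable {f : ℝ → ℝ}

theorem bddBelow_quadraticGrowthRates : BddBelow (quadraticGrowthRates f) :=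
  ⟨0, fun _ hg => hg.1⟩

theorem mem_quadraticGrowthRates_of_lipschitz_deriv {f' : ℝ → ℝ} {M g : ℝ}
    (hf : ∀ x, HasDerivAt f (f' x) x) (hM : ∀ s t, |f' s - f' t| ≤ M * |s - t|)
    (hg : M / 2 < g) : g ∈ quadraticGrowthRates f := by
  have hM0 : 0 ≤ M := by simpa using (abs_nonneg _).trans (hM 1 0)
  refine ⟨by linarith, ?_⟩
  refine (bddAbove_range_quadratic (sub_neg.2 hg) (f' 0) (f 0)).range_mono _ fun s => ?_
  have h := le_add_deriv_mul_sub_add_sq_of_lipschitz hf hM 0 s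
  simp only [sub_zero] at h
  linarith

theorem sInf_quadraticGrowthRates_le_of_lipschitz_deriv {f' : ℝ → ℝ} {M : ℝ}
    (hf : ∀ x, HasDerivAt f (f' x) x) (hM : ∀ s t, |f' s - f' t| ≤ M * |s - t|) :
    sInf (quadraticGrowthRates f) ≤ M / 2 :=
  le_of_forall_gt_imp_ge_of_dense fun _ hg =>
    csInf_le bddBelow_quadraticGrowthRates (mem_quadraticGrowthRates_of_lipschitz_deriv hf hM hg)

theorem sInf_quadraticGrowthRates_le_of_bddAbove {a n lam : ℝ} (hlam : 0 ≤ lam) (hn : n ≠ 0)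
    (hbdd : BddAbove (range fun γ => f (a + γ * n) - lam * γ ^ 2)) :
    sInf (quadraticGrowthRates f) ≤ lam / n ^ 2 := by
  refine le_of_forall_gt_imp_ge_of_dense fun g hg => csInf_le bddBelow_quadraticGrowthRates ?_
  have hg' : lam * (1 / n) ^ 2 < g := by rwa [one_div, inv_pow, ← div_eq_mul_inv]
  refine ⟨(div_nonneg hlam (sq_nonneg n)).trans hg.le, ?_⟩
  have hs : ∀ s, a + (-a / n + s * (1 / n)) * n = s := fun s => by field_simp; ring
  simpa only [hs] using hbdd.comp_affine_sub_sq (-a / n) (1 / n) hg'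

theorem exists_mem_quadraticGrowthRates_mul_sq_lt {n lam : ℝ}
    (hne : (quadraticGrowthRates f).Nonempty) (h : sInf (quadraticGrowthRates f) * n ^ 2 < lam) :
    ∃ g ∈ quadraticGrowthRates f, g * n ^ 2 < lam := by
  rcases eq_or_ne n 0 with rfl | hn
  · obtain ⟨g, hg⟩ := hne
    exact ⟨g, hg, by simpa using h⟩
  · have hn2 : 0 < n ^ 2 := by positivity
    obtain ⟨g, hg, hlt⟩ := exists_lt_of_csInf_lt hne ((lt_div_iff₀ hn2).mpr h)
    exact ⟨g, hg, (lt_div_iff₀ hn2).mp hlt⟩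

end QuadraticGrowth

section AffineComp

variable {f f' : ℝ → ℝ} (a n : ℝ)

theorem ConvexOn.comp_add_mul (hf : ConvexOn ℝ univ f) :
    ConvexOn ℝ univ fun γ => f (a + γ * n) :=
  (hf.translate_right a).comp_linearMap (LinearMap.smulRight LinearMap.id n)

theorem HasDerivAt.comp_add_mul {x d : ℝ} (hf : HasDerivAt f d (a + x * n)) :
    HasDerivAt (fun γ => f (a + γ * n)) (d * n) x :=
  hf.comp x (((hasDerivAt_id x).mul_const n).const_add a |>.congr_deriv (one_mul n))

theorem abs_sub_comp_add_mul_le {M : ℝ} (hM : ∀ s t, |f' s - f' t| ≤ M * |s - t|) (x y : ℝ) :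
    |f' (a + x * n) * n - f' (a + y * n) * n| ≤ M * n ^ 2 * |x - y| := by
  calc |f' (a + x * n) * n - f' (a + y * n) * n|
      = |f' (a + x * n) - f' (a + y * n)| * |n| := by rw [← sub_mul, abs_mul]
    _ ≤ M * |a + x * n - (a + y * n)| * |n| := by gcongr; exact hM _ _
    _ = M * n ^ 2 * |x - y| := by
      rw [show a + x * n - (a + y * n) = (x - y) * n by ring, abs_mul, ← sq_abs n]; ring

end AffineComp

section PenalizedMaximization

variable {F F' : ℝ → ℝ} {lam : ℝ}

theorem abs_deriv_div_le_abs_of_isMax (hF : ConvexOn ℝ univ F) (hF' : ∀ x, HasDerivAt F (F' x) x)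
    (hlam : 0 < lam) {γs : ℝ} (hmax : ∀ γ, F γ - lam * γ ^ 2 ≤ F γs - lam * γs ^ 2) :
    |F' 0| / (2 * lam) ≤ |γs| := by
  have hcrit : F' γs - 2 * lam * γs = 0 := by
    refine IsLocalMax.hasDerivAt_eq_zero (Eventually.of_forall hmax) ?_
    exact ((hF' γs).sub ((hasDerivAt_pow 2 γs).const_mul lam)).congr_deriv (by push_cast; ring)
  -- Compare the values at `γs` and at `γ₀ = F' 0 / (2 λ)` through the tangent lines of `F`
  -- at `γs` (a critical point) and at `0`.
  set γ₀ := F' 0 / (2 * lam) with hγ₀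
  have h₀ : 2 * lam * γ₀ = F' 0 := by rw [hγ₀]; field_simp
  have hup : F 0 + 2 * lam * γ₀ ^ 2 ≤ F γ₀ := by
    linear_combination hF.add_deriv_mul_sub_le (hF' 0) γ₀ + γ₀ * h₀
  have hdown : F γs - 2 * lam * γs ^ 2 ≤ F 0 := by
    linear_combination hF.add_deriv_mul_sub_le (hF' γs) 0 + γs * hcrit
  have hsq : γ₀ ^ 2 ≤ γs ^ 2 :=
    le_of_mul_le_mul_left (by linarith [hmax γ₀] : lam * γ₀ ^ 2 ≤ lam * γs ^ 2) hlam
  calc |F' 0| / (2 * lam) = |γ₀| := by rw [abs_div, abs_of_pos (by positivity : 0 < 2 * lam)]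
    _ ≤ |γs| := sq_le_sq.mp hsq

theorem strictConcaveOn_sub_sq_of_lipschitz_deriv {K : ℝ} (hF' : ∀ x, HasDerivAt F (F' x) x)
    (hK : ∀ s t, |F' s - F' t| ≤ K * |s - t|) (hlam : K < 2 * lam) :
    StrictConcaveOn ℝ univ fun γ => F γ - lam * γ ^ 2 := by
  have hd : ∀ γ, HasDerivAt (fun γ => F γ - lam * γ ^ 2) (F' γ - 2 * lam * γ) γ := fun γ =>
    ((hF' γ).sub ((hasDerivAt_pow 2 γ).const_mul lam)).congr_deriv (by push_cast; ring)
  refine StrictAnti.strictConcaveOn_univ_of_deriv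
    (continuous_iff_continuousAt.mpr fun γ => (hd γ).continuousAt) ?_
  rw [show deriv _ = _ from funext fun γ => (hd γ).deriv]
  intro x y hxy
  have h := (le_abs_self _).trans (hK y x)
  rw [abs_of_pos (sub_pos.2 hxy)] at h
  nlinarith

end PenalizedMaximization

theorem scalarized_c_transform_properties_general {d : ℕ}
    (N : (Fin d → ℝ) → ℝ)
    (L L' : ℝ → ℝ)
    (hLconv : ConvexOn ℝ Set.univ L)
    (hLderiv : ∀ s, HasDerivAt L (L' s) s)
    (M : ℝ) (hM : ∀ s t : ℝ, |L' s - L' t| ≤ M * |s - t|)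
    (G : ℝ)
    (hG : G = sInf {g : ℝ | 0 ≤ g ∧ BddAbove (Set.range fun s => L s - g * s ^ 2)})
    (θ zhat : Fin d → ℝ) (lam : ℝ) (hlam : 0 ≤ lam) :
    -- (i) unboundedness
    (lam < G * dualNorm N θ ^ 2 →
      (⨆ γ : ℝ, ((L (dotp θ zhat + γ * dualNorm N θ) - lam * γ ^ 2 : ℝ) : EReal)) = ⊤) ∧
    -- (ii) solvability and lower bound on the maximizers
    (G * dualNorm N θ ^ 2 < lam →
      (∃ γs : ℝ, ∀ γ : ℝ,
        L (dotp θ zhat + γ * dualNorm N θ) - lam * γ ^ 2 ≤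
          L (dotp θ zhat + γs * dualNorm N θ) - lam * γs ^ 2) ∧
      (∀ γs : ℝ, (∀ γ : ℝ,
        L (dotp θ zhat + γ * dualNorm N θ) - lam * γ ^ 2 ≤
          L (dotp θ zhat + γs * dualNorm N θ) - lam * γs ^ 2) →
        dualNorm N θ / (2 * lam) * |L' (dotp θ zhat)| ≤ |γs|)) ∧
    -- (iii) concavity and uniqueness of the maximizer
    (M * dualNorm N θ ^ 2 / 2 < lam →
      ConcaveOn ℝ Set.univ
        (fun γ : ℝ => L (dotp θ zhat + γ * dualNorm N θ) - lam * γ ^ 2) ∧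
      (∃! γs : ℝ, ∀ γ : ℝ,
        L (dotp θ zhat + γ * dualNorm N θ) - lam * γ ^ 2 ≤
          L (dotp θ zhat + γs * dualNorm N θ) - lam * γs ^ 2)) := by
  change G = sInf (quadraticGrowthRates L) at hG
  set n := dualNorm N θ
  set a := dotp θ zhat
  have hF' : ∀ γ, HasDerivAt (fun γ => L (a + γ * n)) (L' (a + γ * n) * n) γ :=
    fun γ => (hLderiv _).comp_add_mul a n
  have hG0 : 0 ≤ G := hG ▸ Real.sInf_nonneg fun _ hg => hg.1
  have hexists (h : G * n ^ 2 < lam) :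
      ∃ γs, ∀ γ, L (a + γ * n) - lam * γ ^ 2 ≤ L (a + γs * n) - lam * γs ^ 2 := by
    obtain ⟨g, hg, hgn⟩ := exists_mem_quadraticGrowthRates_mul_sq_lt
      ⟨_, mem_quadraticGrowthRates_of_lipschitz_deriv hLderiv hM (lt_add_one _)⟩ (hG ▸ h)
    exact exists_forall_sub_sq_le (continuous_iff_continuousAt.mpr fun γ => (hF' γ).continuousAt)
      (hg.2.comp_affine_sub_sq a n (left_lt_add_div_two.2 hgn)) (add_div_two_lt_right.2 hgn)
  refine ⟨fun h => ?_, fun h => ⟨hexists h, fun γs hγs => ?_⟩, fun h => ?_⟩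
  · refine EReal.iSup_coe_eq_top_of_not_bddAbove fun hbdd => ?_
    have hn : n ≠ 0 := by rintro hn; simp [hn] at h; linarith
    have hle := sInf_quadraticGrowthRates_le_of_bddAbove hlam hn hbdd
    rw [← hG, le_div_iff₀ (by positivity)] at hle
    linarith
  · have hlam0 : 0 < lam := by nlinarith [sq_nonneg n]
    calc n / (2 * lam) * |L' a| ≤ |L' (a + 0 * n) * n| / (2 * lam) := by
          rw [zero_mul, add_zero, abs_mul, mul_comm, mul_div_assoc']
          gcongr
          exact le_abs_self n
      _ ≤ |γs| := abs_deriv_div_le_abs_of_isMax (hLconv.comp_add_mul a n) hF' hlam0 hγs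
  · have hconc := strictConcaveOn_sub_sq_of_lipschitz_deriv hF' (abs_sub_comp_add_mul_le a n hM)
      (by linarith : M * n ^ 2 < 2 * lam)
    have hGn : G * n ^ 2 < lam := by
      nlinarith [hG ▸ sInf_quadraticGrowthRates_le_of_lipschitz_deriv hLderiv hM, sq_nonneg n]
    obtain ⟨γs, hγs⟩ := hexists hGn
    exact ⟨hconc.concaveOn, γs, hγs, fun γ hγ =>
      hconc.eq_of_isMaxOn (fun x _ => hγ x) (fun x _ => hγs x) (mem_univ γ) (mem_univ γs)⟩

/-- **Convexity and solvability of the scalarized `c`-transform problem.**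
For a convex, differentiable, `M`-smooth loss `L` with quadratic growth rate `G`, the
problem `sup_γ φ(γ)` with `φ(γ) = L(⟨θ, ẑ⟩ + γ‖θ‖_*) − λγ²` is (i) unbounded if
`λ < G‖θ‖_*²`; (ii) solvable if `λ > G‖θ‖_*²`, with every maximizer `γ*` satisfying
`|γ*| ≥ (‖θ‖_*/(2λ))|L'(⟨θ, ẑ⟩)|`; and (iii) concave with a unique maximizer if
`λ > M‖θ‖_*²/2`. -/
theorem scalarized_c_transform_properties {d : ℕ}
    (N : (Fin d → ℝ) → ℝ)
    (hN0 : ∀ x, N x = 0 ↔ x = 0)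
    (hNhom : ∀ (a : ℝ) x, N (a • x) = |a| * N x)
    (hNtri : ∀ x y, N (x + y) ≤ N x + N y)
    (L L' : ℝ → ℝ)
    (hLconv : ConvexOn ℝ Set.univ L)
    (hLderiv : ∀ s, HasDerivAt L (L' s) s)
    (M : ℝ) (hM : ∀ s t : ℝ, |L' s - L' t| ≤ M * |s - t|)
    (G : ℝ)
    (hG : G = sInf {g : ℝ | 0 ≤ g ∧ BddAbove (Set.range fun s => L s - g * s ^ 2)})
    (θ zhat : Fin d → ℝ) (lam : ℝ) (hlam : 0 ≤ lam) :
    -- (i) unboundedness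
    (lam < G * dualNorm N θ ^ 2 →
      (⨆ γ : ℝ, ((L (dotp θ zhat + γ * dualNorm N θ) - lam * γ ^ 2 : ℝ) : EReal)) = ⊤) ∧
    -- (ii) solvability and lower bound on the maximizers
    (G * dualNorm N θ ^ 2 < lam →
      (∃ γs : ℝ, ∀ γ : ℝ,
        L (dotp θ zhat + γ * dualNorm N θ) - lam * γ ^ 2 ≤
          L (dotp θ zhat + γs * dualNorm N θ) - lam * γs ^ 2) ∧
      (∀ γs : ℝ, (∀ γ : ℝ,
        L (dotp θ zhat + γ * dualNorm N θ) - lam * γ ^ 2 ≤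
          L (dotp θ zhat + γs * dualNorm N θ) - lam * γs ^ 2) →
        dualNorm N θ / (2 * lam) * |L' (dotp θ zhat)| ≤ |γs|)) ∧
    -- (iii) concavity and uniqueness of the maximizer
    (M * dualNorm N θ ^ 2 / 2 < lam →
      ConcaveOn ℝ Set.univ
        (fun γ : ℝ => L (dotp θ zhat + γ * dualNorm N θ) - lam * γ ^ 2) ∧
      (∃! γs : ℝ, ∀ γ : ℝ,
        L (dotp θ zhat + γ * dualNorm N θ) - lam * γ ^ 2 ≤
          L (dotp θ zhat + γs * dualNorm N θ) - lam * γs ^ 2)) :=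
  scalarized_c_transform_properties_general N L L' hLconv hLderiv M hM G hG θ zhat lam hlam
end
end

section
/- Let θ ∈ ℝ^d with θ_i ≥ 0 for all i and Σ_{i∈[d]} θ_i = 1, let λ > 0, and let ẑ ∈ ℝ^d with ẑ_i > 0 for all i. Set u_i = θ_i ẑ_i for i ∈ [d], let σ be a permutation of [d] with u_{σ(1)} ≤ u_{σ(2)} ≤ ⋯ ≤ u_{σ(d)}, and define k = max{ i ∈ [d] : (1 − (d − i)λ) u_{σ(i)} ≤ λ Σ_{j∈[i]} u_{σ(j)} } and γ* = ((d − k)λ − 1) / Σ_{i∈[k]} u_{σ(i)}. Consider φ(γ) = 1 + log(−γ) + Σ_{i∈[d]} λ h(γ θ_i ẑ_i / λ) for γ < 0. If λ ≥ 1/‖θ‖₀, then γ* is a maximizer of φ over (−∞, 0); if 0 < λ < 1/‖θ‖₀, then sup_{γ < 0} φ(γ) = +∞. -/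
/-!
In the variable `t = log (-γ)` each summand `λ h(γ u_i / λ)` is concave: it equals
`-e^t u_i` while `e^t u_i ≤ λ` and is affine with slope `-λ` afterwards. Hence `φ` is
concave in `t` with derivative `1 - ∑_i min (-γ u_i, λ)`, and tangent lines bound it from
above. The sorting defines `k` so that `-γ* u_{σ(i)} ≤ λ` exactly for `i ≤ k`, which makes
this derivative vanish at `γ*`. If `λ ‖θ‖₀ < 1`, then for large `-γ` all nonzero summands
are affine and `φ(γ) = (1 - λ ‖θ‖₀) log (-γ) + const → ∞`.
-/

open Set

noncomputable section

/-- The auxiliary function `h(s) = −1 − log(−s)` for `s < −1`, `h(s) = s` for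
`−1 ≤ s ≤ 0`, and `h(s) = +∞` for `s > 0`. -/
def auxH (s : ℝ) : EReal :=
  if 0 < s then ⊤
  else if s < -1 then ((-1 - Real.log (-s) : ℝ) : EReal)
  else ((s : ℝ) : EReal)

/-- The objective `φ(γ) = 1 + log(−γ) + Σ_i λ h(γ θ_i ẑ_i / λ)` of the `c`-transform
evaluation problem in distributionally robust log-optimal portfolio selection. -/
def portfolioObj {d : ℕ} (θ zhat : Fin d → ℝ) (lam : ℝ) (γ : ℝ) : EReal :=
  ((1 + Real.log (-γ) : ℝ) : EReal) +
    ∑ i : Fin d, (lam : EReal) * auxH (γ * (θ i * zhat i) / lam)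

open Finset Filter

namespace EReal

theorem coe_finset_sum {ι : Type*} (s : Finset ι) (f : ι → ℝ) :
    ((∑ i ∈ s, f i : ℝ) : EReal) = ∑ i ∈ s, (f i : EReal) :=
  map_sum (⟨⟨(↑), coe_zero⟩, coe_add⟩ : ℝ →+ EReal) f s

end EReal

theorem card_filter_comp_perm {α : Type*} [Fintype α] (p : α → Prop) [DecidablePred p]
    (σ : Equiv.Perm α) :
    #{i | p (σ i)} = #{i | p i} := by
  simp only [card_filter]
  exact Equiv.sum_comp σ fun i => if p i then 1 else 0

theorem exists_filter_ne_zero_eq_Ici {α : Type*} [LinearOrder α] [Fintype α]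
    [LocallyFiniteOrderTop α] {v : α → ℝ} (hv0 : ∀ i, 0 ≤ v i) (hmono : Monotone v)
    (hne : (Finset.univ.filter fun i => v i ≠ 0).Nonempty) :
    ∃ m, Finset.univ.filter (fun i => v i ≠ 0) = Finset.Ici m := by
  refine ⟨(Finset.univ.filter fun i => v i ≠ 0).min' hne,
    Finset.ext fun i => ⟨fun hi => mem_Ici.2 (min'_le _ i hi), fun hi => ?_⟩⟩
  have hpos := (hv0 _).lt_of_ne (mem_filter.1 (min'_mem _ hne)).2.symm
  exact mem_filter.2 ⟨mem_univ i, (hpos.trans_le (hmono (mem_Ici.1 hi))).ne'⟩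

def auxHReal (s : ℝ) : ℝ := if s < -1 then -1 - Real.log (-s) else s

theorem auxH_of_nonpos {s : ℝ} (hs : s ≤ 0) : auxH s = auxHReal s := by
  unfold auxH auxHReal
  rw [if_neg hs.not_gt]
  split_ifs <;> rfl

theorem auxHReal_neg_of_le_one {q : ℝ} (hq : q ≤ 1) : auxHReal (-q) = -q :=
  if_neg (by linarith)

theorem auxHReal_neg_of_one_le {q : ℝ} (hq : 1 ≤ q) : auxHReal (-q) = -1 - Real.log q := by
  rcases hq.eq_or_lt with rfl | hq
  · simp [auxHReal]
  · simp [auxHReal, hq]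

/-- The tangent line at `p` of the concave function `log q ↦ auxHReal (-q)`. -/
theorem auxHReal_neg_le_tangent {p q : ℝ} (hp : 0 < p) (hq : 0 < q) :
    auxHReal (-q) ≤ auxHReal (-p) - min p 1 * (Real.log q - Real.log p) := by
  rcases le_or_gt p 1 with hp1 | hp1 <;> rcases le_or_gt q 1 with hq1 | hq1
  · rw [auxHReal_neg_of_le_one hp1, auxHReal_neg_of_le_one hq1, min_eq_left hp1,
      ← Real.log_div hq.ne' hp.ne']
    have h := mul_le_mul_of_nonneg_left (Real.log_le_sub_one_of_pos (div_pos hq hp)) hp.le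
    rw [mul_sub, mul_div_cancel₀ q hp.ne'] at h
    linarith
  · rw [auxHReal_neg_of_le_one hp1, auxHReal_neg_of_one_le hq1.le, min_eq_left hp1]
    have hlogp : p - 1 ≤ p * Real.log p := by
      have h := mul_le_mul_of_nonneg_left (Real.one_sub_inv_le_log_of_pos hp) hp.le
      rwa [mul_sub, mul_inv_cancel₀ hp.ne', mul_one] at h
    have hlogq : 0 ≤ (1 - p) * Real.log q :=
      mul_nonneg (by linarith) (Real.log_nonneg hq1.le)
    linarith
  · rw [auxHReal_neg_of_one_le hp1.le, auxHReal_neg_of_le_one hq1, min_eq_right hp1.le]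
    linarith [Real.log_le_sub_one_of_pos hq]
  · rw [auxHReal_neg_of_one_le hp1.le, auxHReal_neg_of_one_le hq1.le, min_eq_right hp1.le]
    linarith

theorem mul_auxHReal_le_tangent {lam c γ γs : ℝ} (hlam : 0 < lam) (hc : 0 ≤ c)
    (hγ : γ < 0) (hγs : γs < 0) :
    lam * auxHReal (γ * c / lam) ≤
      lam * auxHReal (γs * c / lam) - min (-γs * c) lam * (Real.log (-γ) - Real.log (-γs)) := by
  rcases hc.eq_or_lt with rfl | hc
  · simp [hlam.le]
  have hlog : ∀ δ < 0, Real.log (-δ * c / lam) = Real.log (-δ) + Real.log (c / lam) :=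
    fun δ hδ => by
      rw [mul_div_assoc, Real.log_mul (by linarith) (div_pos hc hlam).ne']
  have key := auxHReal_neg_le_tangent (div_pos (mul_pos (neg_pos.2 hγs) hc) hlam)
    (div_pos (mul_pos (neg_pos.2 hγ) hc) hlam)
  rw [hlog γ hγ, hlog γs hγs, neg_mul, neg_mul, neg_div, neg_div, neg_neg, neg_neg] at key
  have hmin : min (-γs * c) lam = lam * min (-γs * c / lam) 1 := by
    rw [mul_min_of_nonneg _ _ hlam.le, mul_div_cancel₀ _ hlam.ne', mul_one]
  rw [hmin, neg_mul, neg_div]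
  linear_combination lam * key

section Objective

variable {ι : Type*} [Fintype ι]

def portfolioObjReal (u : ι → ℝ) (lam γ : ℝ) : ℝ :=
  1 + Real.log (-γ) + ∑ i, lam * auxHReal (γ * u i / lam)

theorem portfolioObj_eq_coe_portfolioObjReal {d : ℕ} {θ zhat : Fin d → ℝ} {lam γ : ℝ}
    (hlam : 0 ≤ lam) (hu : ∀ i, 0 ≤ θ i * zhat i) (hγ : γ ≤ 0) :
    portfolioObj θ zhat lam γ = portfolioObjReal (fun i => θ i * zhat i) lam γ := by
  have hterm (i : Fin d) : (lam : EReal) * auxH (γ * (θ i * zhat i) / lam) =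
      ((lam * auxHReal (γ * (θ i * zhat i) / lam) : ℝ) : EReal) := by
    rw [auxH_of_nonpos (div_nonpos_of_nonpos_of_nonneg (mul_nonpos_of_nonpos_of_nonneg hγ (hu i))
      hlam), EReal.coe_mul]
  simp only [portfolioObj, portfolioObjReal, hterm, ← EReal.coe_finset_sum, EReal.coe_add]

theorem portfolioObjReal_le_of_sum_min_eq_one {u : ι → ℝ} {lam γs γ : ℝ}
    (hu : ∀ i, 0 ≤ u i) (hlam : 0 < lam) (hγs : γs < 0)
    (hsum : ∑ i, min (-γs * u i) lam = 1) (hγ : γ < 0) :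
    portfolioObjReal u lam γ ≤ portfolioObjReal u lam γs := by
  have h := Finset.sum_le_sum fun i (_ : i ∈ Finset.univ) =>
    mul_auxHReal_le_tangent hlam (hu i) hγ hγs
  rw [sum_sub_distrib, ← sum_mul, hsum] at h
  unfold portfolioObjReal
  linarith

theorem iSup_portfolioObjReal_eq_top {u : ι → ℝ} {lam : ℝ} (hu : ∀ i, 0 ≤ u i)
    (hlam : 0 < lam) (hn : lam * #{i | u i ≠ 0} < 1) :
    ⨆ γ ∈ Iio (0 : ℝ), (portfolioObjReal u lam γ : EReal) = ⊤ := by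
  set T : Finset ι := {i | u i ≠ 0}
  have hT : ∀ i ∈ T, 0 < u i := fun i hi => (hu i).lt_of_ne (mem_filter.1 hi).2.symm
  set C := ∑ i ∈ T, lam * (1 + Real.log (u i / lam))
  have hev :
      ∀ᶠ x in atTop, 1 + (1 - lam * #T) * Real.log x - C = portfolioObjReal u lam (-x) := by
    have hlarge : ∀ᶠ x in atTop, 0 < x ∧ ∀ i ∈ T, lam / u i ≤ x :=
      (eventually_gt_atTop 0).and ((eventually_all_finset T).2 fun i _ => eventually_ge_atTop _)
    filter_upwards [hlarge] with x ⟨hx, hxT⟩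
    have hterm : ∀ i ∈ T, lam * auxHReal (-x * u i / lam) =
        -(lam * (1 + Real.log (u i / lam))) - lam * Real.log x := fun i hi => by
      rw [neg_mul, neg_div, auxHReal_neg_of_one_le
          ((one_le_div hlam).2 ((div_le_iff₀ (hT i hi)).1 (hxT i hi))),
        mul_div_assoc, Real.log_mul hx.ne' (div_pos (hT i hi) hlam).ne']
      ring
    have hsupp :
        ∑ i ∈ T, lam * auxHReal (-x * u i / lam) = ∑ i, lam * auxHReal (-x * u i / lam) :=
      sum_filter_of_ne fun i _ hi hui => hi (by simp [hui, auxHReal])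
    rw [portfolioObjReal, neg_neg, ← hsupp, sum_congr rfl hterm, sum_sub_distrib, sum_neg_distrib,
      sum_const, nsmul_eq_mul]
    ring
  have htend : Tendsto (fun x => 1 + (1 - lam * #T) * Real.log x - C) atTop atTop :=
    tendsto_atTop_add_const_right _ _ <| tendsto_atTop_add_const_left _ _ <|
      Real.tendsto_log_atTop.const_mul_atTop (by linarith)
  rw [EReal.eq_top_iff_forall_lt]
  intro M
  obtain ⟨x, hxM, hx⟩ := ((htend.congr' hev).eventually_gt_atTop M).and (eventually_gt_atTop 0)
    |>.exists
  exact (EReal.coe_lt_coe_iff.2 hxM).trans_le <|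
    le_iSup₂_of_le (f := fun γ (_ : γ ∈ Iio (0 : ℝ)) => (portfolioObjReal u lam γ : EReal))
      (-x) (neg_lt_zero.2 hx) le_rfl

end Objective

section Waterfilling

variable {d : ℕ} (v : Fin d → ℝ) (lam : ℝ)

def prefixSum (i : ℕ) : ℝ := ∑ j ∈ Finset.univ.filter (fun j : Fin d => (j : ℕ) < i), v j

/-- `i` is 1-based as in the paper while `v` is 0-based, so `v ⟨i - 1, _⟩` is `u_{σ(i)}`. -/
def criticalIndices : Set ℕ :=
  {i | 1 ≤ i ∧ i ≤ d ∧ ∃ h : i - 1 < d,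
    (1 - ((d : ℝ) - i) * lam) * v ⟨i - 1, h⟩ ≤ lam * prefixSum v i}

variable {v}

theorem prefixSum_succ {k : ℕ} (hk : k < d) :
    prefixSum v (k + 1) = prefixSum v k + v ⟨k, hk⟩ := by
  have hins : Finset.univ.filter (fun j : Fin d => (j : ℕ) < k + 1) =
      insert ⟨k, hk⟩ (Finset.univ.filter fun j : Fin d => (j : ℕ) < k) := by
    ext j
    simp only [Finset.mem_filter, Finset.mem_insert, Finset.mem_univ, true_and, Fin.ext_iff]
    omega
  rw [prefixSum, hins, sum_insert (by simp), add_comm]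
  rfl

theorem succ_mem_criticalIndices_iff {k : ℕ} (hk : k < d) :
    k + 1 ∈ criticalIndices v lam ↔
      (1 - ((d : ℝ) - k) * lam) * v ⟨k, hk⟩ ≤ lam * prefixSum v k := by
  have hcond :
      (1 - ((d : ℝ) - (k + 1 : ℕ)) * lam) * v ⟨k, hk⟩ ≤ lam * prefixSum v (k + 1) ↔
        (1 - ((d : ℝ) - k) * lam) * v ⟨k, hk⟩ ≤ lam * prefixSum v k := by
    rw [prefixSum_succ hk]
    push_cast
    constructor <;> intro h <;> linear_combination h
  exact ⟨fun ⟨_, _, _, h⟩ => hcond.1 h, fun h => ⟨by omega, hk, hk, hcond.2 h⟩⟩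

theorem bddAbove_criticalIndices : BddAbove (criticalIndices v lam) :=
  ⟨d, fun _ hi => hi.2.1⟩

theorem sum_min_mul_eq_prefixSum {y : ℝ} {k : ℕ} (hkd : k ≤ d)
    (hlow : ∀ i : Fin d, (i : ℕ) < k → y * v i ≤ lam)
    (hhigh : ∀ i : Fin d, k ≤ (i : ℕ) → lam ≤ y * v i) :
    ∑ i, min (y * v i) lam = y * prefixSum v k + ((d : ℝ) - k) * lam := by
  rw [← sum_filter_add_sum_filter_not Finset.univ (fun j : Fin d => (j : ℕ) < k),
    sum_congr rfl fun i hi => min_eq_left (hlow i (mem_filter.1 hi).2),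
    sum_congr rfl fun i hi => min_eq_right (hhigh i (not_lt.1 (mem_filter.1 hi).2)),
    ← mul_sum, sum_const, nsmul_eq_mul]
  have hcard := card_filter_add_card_filter_not (s := Finset.univ) fun j : Fin d => (j : ℕ) < k
  rw [Fin.card_filter_val_lt, card_univ, Fintype.card_fin, min_eq_right hkd] at hcard
  rw [show #{i : Fin d | ¬(i : ℕ) < k} = d - k by omega, Nat.cast_sub hkd]
  rfl

theorem exists_pos_succ_mem_criticalIndices (hv0 : ∀ i, 0 ≤ v i) (hmono : Monotone v)
    (hn : 1 ≤ lam * #{i | v i ≠ 0}) :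
    ∃ m : Fin d, 0 < v m ∧ (m : ℕ) + 1 ∈ criticalIndices v lam := by
  have hne : (Finset.univ.filter fun i => v i ≠ 0).Nonempty :=
    card_pos.1 (Nat.pos_of_ne_zero fun h => by norm_num [h] at hn)
  obtain ⟨m, hm⟩ := exists_filter_ne_zero_eq_Ici hv0 hmono hne
  have hsupp (i : Fin d) : v i ≠ 0 ↔ m ≤ i := by simpa using Finset.ext_iff.1 hm i
  have hm_pos : 0 < v m := (hv0 m).lt_of_ne ((hsupp m).2 le_rfl).symm
  have hm_card : 1 ≤ ((d : ℝ) - m) * lam := by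
    rw [hm, Fin.card_Ici, Nat.cast_sub m.isLt.le] at hn
    linarith
  have hP_m : prefixSum v m = 0 :=
    sum_eq_zero fun j hj => not_not.1 fun h => not_le.2 (mem_filter.1 hj).2 ((hsupp j).1 h)
  exact ⟨m, hm_pos, (succ_mem_criticalIndices_iff lam m.isLt).2 (by rw [hP_m]; nlinarith)⟩

theorem sum_min_eq_one_of_eq_sSup (hv0 : ∀ i, 0 ≤ v i) (hmono : Monotone v) (hlam : 0 < lam)
    (hn : 1 ≤ lam * #{i | v i ≠ 0}) {k : ℕ} (hk : k = sSup (criticalIndices v lam)) :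
    0 < prefixSum v k ∧ ((d : ℝ) - k) * lam < 1 ∧
      ∑ i, min ((1 - ((d : ℝ) - k) * lam) / prefixSum v k * v i) lam = 1 := by
  obtain ⟨m, hm_pos, hm_mem⟩ := exists_pos_succ_mem_criticalIndices lam hv0 hmono hn
  have hbdd := bddAbove_criticalIndices (v := v) lam
  have hk_mem : k ∈ criticalIndices v lam := hk ▸ Nat.sSup_mem ⟨_, hm_mem⟩ hbdd
  have hmk : (m : ℕ) + 1 ≤ k := hk ▸ le_csSup hbdd hm_mem
  obtain ⟨-, hkd, hk1, hcond⟩ := hk_mem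
  have hP : 0 < prefixSum v k :=
    hm_pos.trans_le (single_le_sum (fun j _ => hv0 j) (mem_filter.2 ⟨mem_univ m, by omega⟩))
  have hnext (hkd' : k < d) : lam * prefixSum v k < (1 - ((d : ℝ) - k) * lam) * v ⟨k, hkd'⟩ :=
    not_le.1 fun h => by
      have := le_csSup hbdd ((succ_mem_criticalIndices_iff lam hkd').2 h)
      omega
  have hcoef : 0 < 1 - ((d : ℝ) - k) * lam := by
    rcases hkd.lt_or_eq with hkd' | rfl
    · nlinarith [hnext hkd', hv0 ⟨k, hkd'⟩, mul_pos hlam hP]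
    · simp
  refine ⟨hP, by linarith, ?_⟩
  rw [sum_min_mul_eq_prefixSum lam hkd (fun i hi => ?_) (fun i hi => ?_)]
  · field_simp
    ring
  · rw [div_mul_eq_mul_div, div_le_iff₀ hP]
    calc (1 - ((d : ℝ) - k) * lam) * v i
        ≤ (1 - ((d : ℝ) - k) * lam) * v ⟨k - 1, hk1⟩ :=
          mul_le_mul_of_nonneg_left (hmono (Nat.le_sub_one_of_lt hi)) hcoef.le
      _ ≤ lam * prefixSum v k := hcond
  · rw [div_mul_eq_mul_div, le_div_iff₀ hP]
    have hkd' : k < d := hi.trans_lt i.isLt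
    exact (hnext hkd').le.trans
      (mul_le_mul_of_nonneg_left (hmono (show ⟨k, hkd'⟩ ≤ i from hi)) hcoef.le)

end Waterfilling

theorem portfolio_c_transform_general {d : ℕ}
    (θ : Fin d → ℝ) (hθnn : ∀ i, 0 ≤ θ i) (hθsum : ∑ i, θ i = 1)
    (zhat : Fin d → ℝ) (hz : ∀ i, 0 < zhat i)
    (lam : ℝ) (hlam : 0 < lam)
    (σ : Equiv.Perm (Fin d))
    (hσ : ∀ i j : Fin d, i ≤ j → θ (σ i) * zhat (σ i) ≤ θ (σ j) * zhat (σ j))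
    (k : ℕ)
    (hk : k = sSup {i : ℕ | 1 ≤ i ∧ i ≤ d ∧ ∃ h : i - 1 < d,
      (1 - ((d : ℝ) - i) * lam) * (θ (σ ⟨i - 1, h⟩) * zhat (σ ⟨i - 1, h⟩)) ≤
        lam * ∑ j ∈ Finset.univ.filter (fun j : Fin d => (j : ℕ) < i),
          θ (σ j) * zhat (σ j)})
    (γs : ℝ)
    (hγs : γs = (((d : ℝ) - k) * lam - 1) /
      ∑ j ∈ Finset.univ.filter (fun j : Fin d => (j : ℕ) < k), θ (σ j) * zhat (σ j)) :
    ((1 : ℝ) / ((Finset.univ.filter fun i : Fin d => θ i ≠ 0).card : ℝ) ≤ lam →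
      γs < 0 ∧ ∀ γ : ℝ, γ < 0 → portfolioObj θ zhat lam γ ≤ portfolioObj θ zhat lam γs) ∧
    (lam < (1 : ℝ) / ((Finset.univ.filter fun i : Fin d => θ i ≠ 0).card : ℝ) →
      (⨆ γ ∈ Iio (0 : ℝ), portfolioObj θ zhat lam γ) = (⊤ : EReal)) := by
  have hu (i : Fin d) : 0 ≤ θ i * zhat i := mul_nonneg (hθnn i) (hz i).le
  have hobj (γ : ℝ) (hγ : γ ≤ 0) := portfolioObj_eq_coe_portfolioObjReal hlam.le hu hγ
  have hsupp : #{i | θ i ≠ 0} = #{i | θ i * zhat i ≠ 0} :=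
    congrArg card (filter_congr fun i _ => by simp [(hz i).ne'])
  rw [hsupp]
  constructor
  · intro hlam1
    obtain ⟨i, -, hi⟩ := exists_ne_zero_of_sum_ne_zero (hθsum ▸ one_ne_zero)
    have hn : 1 ≤ lam * #{i | θ (σ i) * zhat (σ i) ≠ 0} := by
      rwa [card_filter_comp_perm (fun i => θ i * zhat i ≠ 0), ← div_le_iff₀
        (Nat.cast_pos.2 (card_pos.2 ⟨i, by simpa using mul_ne_zero hi (hz i).ne'⟩))]
    obtain ⟨hP, hcoef, hsum⟩ := sum_min_eq_one_of_eq_sSup lam (fun i => hu (σ i))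
      (fun i j hij => hσ i j hij) hlam hn hk
    have hγs_neg :
        -γs = (1 - ((d : ℝ) - k) * lam) / prefixSum (fun i => θ (σ i) * zhat (σ i)) k := by
      rw [hγs, ← neg_div, neg_sub]
      rfl
    have hγs0 : γs < 0 := neg_pos.1 (hγs_neg ▸ div_pos (by linarith) hP)
    refine ⟨hγs0, fun γ hγ => ?_⟩
    rw [hobj γ hγ.le, hobj γs hγs0.le, EReal.coe_le_coe_iff]
    refine portfolioObjReal_le_of_sum_min_eq_one hu hlam hγs0 ?_ hγ
    rw [← Equiv.sum_comp σ, hγs_neg]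
    exact hsum
  · intro hlam2
    rw [biSup_congr' (p := (· ∈ Set.Iio 0)) fun γ hγ => hobj γ (le_of_lt hγ)]
    refine iSup_portfolioObjReal_eq_top hu hlam ?_
    rcases Nat.eq_zero_or_pos #{i | θ i * zhat i ≠ 0} with h0 | hpos
    · rw [h0, Nat.cast_zero, div_zero] at hlam2
      linarith
    · rwa [lt_div_iff₀ (by exact_mod_cast hpos)] at hlam2

/-- **Closed-form solution of the `c`-transform evaluation problem by sorting.**
For a portfolio `θ` in the simplex, `λ > 0` and strictly positive returns `ẑ`, with
`u_i = θ_i ẑ_i` sorted increasingly by a permutation `σ`, the critical index `k` and the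
point `γ* = ((d − k)λ − 1)/Σ_{i∈[k]} u_{σ(i)}`: if `λ ≥ 1/‖θ‖₀` then `γ*` maximizes
`φ` over `(−∞, 0)`, and if `λ < 1/‖θ‖₀` then `sup_{γ<0} φ(γ) = +∞`. -/
theorem portfolio_c_transform {d : ℕ} (hd : 0 < d)
    (θ : Fin d → ℝ) (hθnn : ∀ i, 0 ≤ θ i) (hθsum : ∑ i, θ i = 1)
    (zhat : Fin d → ℝ) (hz : ∀ i, 0 < zhat i)
    (lam : ℝ) (hlam : 0 < lam)
    (σ : Equiv.Perm (Fin d))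
    (hσ : ∀ i j : Fin d, i ≤ j → θ (σ i) * zhat (σ i) ≤ θ (σ j) * zhat (σ j))
    (k : ℕ)
    (hk : k = sSup {i : ℕ | 1 ≤ i ∧ i ≤ d ∧ ∃ h : i - 1 < d,
      (1 - ((d : ℝ) - i) * lam) * (θ (σ ⟨i - 1, h⟩) * zhat (σ ⟨i - 1, h⟩)) ≤
        lam * ∑ j ∈ Finset.univ.filter (fun j : Fin d => (j : ℕ) < i),
          θ (σ j) * zhat (σ j)})
    (γs : ℝ)
    (hγs : γs = (((d : ℝ) - k) * lam - 1) /
      ∑ j ∈ Finset.univ.filter (fun j : Fin d => (j : ℕ) < k), θ (σ j) * zhat (σ j)) :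
    ((1 : ℝ) / ((Finset.univ.filter fun i : Fin d => θ i ≠ 0).card : ℝ) ≤ lam →
      γs < 0 ∧ ∀ γ : ℝ, γ < 0 → portfolioObj θ zhat lam γ ≤ portfolioObj θ zhat lam γs) ∧
    (lam < (1 : ℝ) / ((Finset.univ.filter fun i : Fin d => θ i ≠ 0).card : ℝ) →
      (⨆ γ ∈ Iio (0 : ℝ), portfolioObj θ zhat lam γ) = (⊤ : EReal)) :=
  portfolio_c_transform_general θ hθnn hθsum zhat hz lam hlam σ hσ k hk γs hγs
end
end
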